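/- arXiv:1406.0052 — 11 statements merged into one kernel-verified Lean document; each statement's English description precedes it below -/
import Mathlib

section
/- Let E be a real inner product space, let A and B be linear subspaces of E, and let ρ be a real number with 0 ≤ ρ < 1. Then the following two conditions are equivalent: (i) ⟨a, b⟩ ≤ ρ‖a‖‖b‖ for all a ∈ A and b ∈ B; (ii) ‖a + b‖² ≥ (1 − ρ²)‖a‖² for all a ∈ A and b ∈ B. -/
/-!
If `⟪-a, b⟫ ≤ ρ‖a‖‖b‖`, then expanding the square gives
`‖a + b‖² ≥ (‖b‖ - ρ‖a‖)² + (1 - ρ²)‖a‖² ≥ (1 - ρ²)‖a‖²`.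
Conversely, the minimum of `t ↦ ‖a + t • b‖²` is `‖a‖² - ⟪a, b⟫² / ‖b‖²`, so applying (ii) to the
projection of `-a` onto the line through `b` gives `⟪a, b⟫² ≤ ρ²‖a‖²‖b‖²`.
-/

open RealInnerProductSpace

section

variable {E : Type*} [SeminormedAddCommGroup E] [InnerProductSpace ℝ E]

theorem one_sub_sq_mul_norm_sq_le_norm_add_sq {a b : E} {ρ : ℝ} (h : ⟪-a, b⟫ ≤ ρ * ‖a‖ * ‖b‖) :
    (1 - ρ ^ 2) * ‖a‖ ^ 2 ≤ ‖a + b‖ ^ 2 := by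
  rw [inner_neg_left] at h
  nlinarith [norm_add_sq_real a b, sq_nonneg (‖b‖ - ρ * ‖a‖)]

theorem norm_sq_mul_norm_add_smul_sq (a b : E) (t : ℝ) :
    ‖b‖ ^ 2 * ‖a + t • b‖ ^ 2 = ‖a‖ ^ 2 * ‖b‖ ^ 2 - ⟪a, b⟫ ^ 2 + (t * ‖b‖ ^ 2 + ⟪a, b⟫) ^ 2 := by
  rw [norm_add_sq_real, real_inner_smul_right, norm_smul, Real.norm_eq_abs, mul_pow, sq_abs]
  ring

theorem exists_norm_sq_mul_norm_add_smul_sq_eq (a b : E) :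
    ∃ t : ℝ, ‖b‖ ^ 2 * ‖a + t • b‖ ^ 2 = ‖a‖ ^ 2 * ‖b‖ ^ 2 - ⟪a, b⟫ ^ 2 := by
  have inner_vanishes : ‖b‖ ^ 2 = 0 → -⟪a, b⟫ = 0 := fun hb => by
    have := abs_real_inner_le_norm a b
    rw [pow_eq_zero_iff two_ne_zero] at hb
    rw [hb, mul_zero, abs_nonpos_iff] at this
    rw [this, neg_zero]
  refine ⟨-⟪a, b⟫ / ‖b‖ ^ 2, ?_⟩
  rw [norm_sq_mul_norm_add_smul_sq, div_mul_cancel_of_imp inner_vanishes]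
  ring

theorem real_inner_le_of_forall_le_norm_add_smul_sq {a b : E} {ρ : ℝ} (hρ : 0 ≤ ρ)
    (h : ∀ t : ℝ, (1 - ρ ^ 2) * ‖a‖ ^ 2 ≤ ‖a + t • b‖ ^ 2) : ⟪a, b⟫ ≤ ρ * ‖a‖ * ‖b‖ := by
  obtain ⟨t, ht⟩ := exists_norm_sq_mul_norm_add_smul_sq_eq a b
  have hsq : ⟪a, b⟫ ^ 2 ≤ (ρ * ‖a‖ * ‖b‖) ^ 2 := by
    nlinarith [mul_le_mul_of_nonneg_left (h t) (sq_nonneg ‖b‖)]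
  exact (le_abs_self _).trans (abs_le_of_sq_le_sq hsq (by positivity))

end

theorem norms_of_projections_remark2_general
    {E : Type*} [NormedAddCommGroup E] [InnerProductSpace ℝ E]
    (A B : Submodule ℝ E) (ρ : ℝ) (hρ0 : 0 ≤ ρ) :
    (∀ a ∈ A, ∀ b ∈ B, ⟪a, b⟫ ≤ ρ * ‖a‖ * ‖b‖) ↔
    (∀ a ∈ A, ∀ b ∈ B, ‖a + b‖ ^ 2 ≥ (1 - ρ ^ 2) * ‖a‖ ^ 2) := by
  constructor
  · intro h a ha b hb
    have hneg := h (-a) (A.neg_mem ha) b hb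
    rw [norm_neg] at hneg
    exact one_sub_sq_mul_norm_sq_le_norm_add_sq hneg
  · intro h a ha b hb
    exact real_inner_le_of_forall_le_norm_add_smul_sq hρ0 fun t => h a ha (t • b) (B.smul_mem t hb)

/-- Equivalent form of the minimal-angle separation assumption (Remark 2):
for linear subspaces `A`, `B` of a real inner product space and `0 ≤ ρ < 1`,
the angle condition `⟪a, b⟫ ≤ ρ‖a‖‖b‖` is equivalent to
`‖a + b‖² ≥ (1 − ρ²)‖a‖²`. -/
theorem norms_of_projections_remark2
    {E : Type*} [NormedAddCommGroup E] [InnerProductSpace ℝ E]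
    (A B : Submodule ℝ E) (ρ : ℝ) (hρ0 : 0 ≤ ρ) (hρ1 : ρ < 1) :
    (∀ a ∈ A, ∀ b ∈ B, ⟪a, b⟫ ≤ ρ * ‖a‖ * ‖b‖) ↔
    (∀ a ∈ A, ∀ b ∈ B, ‖a + b‖ ^ 2 ≥ (1 - ρ ^ 2) * ‖a‖ ^ 2) :=
  norms_of_projections_remark2_general A B ρ hρ0
end

section
/- Let E be a real inner product space, let q and q* be positive integers, let H₁, …, H_q be linear subspaces of E, and for J ⊆ {1,…,q} write H_J = ∑_{j∈J} H_j. Assume there is ρ ∈ [0,1) such that for all disjoint subsets J₁, J₂ ⊆ {1,…,q} with |J₁|, |J₂| ≤ q* and all h₁ ∈ H_{J₁}, h₂ ∈ H_{J₂} one has ⟨h₁, h₂⟩ ≤ ρ‖h₁‖‖h₂‖. Let J₀ ⊆ {1,…,q} with |J₀| ≤ q*, and let f_j ∈ H_j with f_j ≠ 0 for every j ∈ J₀. Then for every nonempty subset J ⊆ J₀ one has ∑_{j∈J} f_j ≠ 0; in particular the minimum κ = min_{∅ ≠ J ⊆ J₀} ‖∑_{j∈J} f_j‖² is strictly positive. 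-/
open RealInnerProductSpace

theorem Finset.exists_gt_forall_le_of_forall_gt {ι α : Type*} [LinearOrder α] [NoMaxOrder α]
    {a : α} (s : Finset ι) (g : ι → α) (h : ∀ i ∈ s, a < g i) :
    ∃ κ, a < κ ∧ ∀ i ∈ s, κ ≤ g i := by
  rcases s.eq_empty_or_nonempty with rfl | hs
  · obtain ⟨κ, hκ⟩ := exists_gt a
    exact ⟨κ, hκ, by simp⟩
  · obtain ⟨i₀, hi₀, hmin⟩ := s.exists_min_image g hs
    exact ⟨g i₀, h i₀ hi₀, hmin⟩

theorem Submodule.mem_finset_sup_erase_of_sum_eq_zero {ι R M : Type*} [DecidableEq ι] [Ring R]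
    [AddCommGroup M] [Module R M] {p : ι → Submodule R M} {s : Finset ι} {f : ι → M}
    (hf : ∀ i ∈ s, f i ∈ p i) (hsum : ∑ i ∈ s, f i = 0) {i₀ : ι} (hi₀ : i₀ ∈ s) :
    f i₀ ∈ (s.erase i₀).sup p := by
  rw [← Finset.add_sum_erase _ _ hi₀, add_eq_zero_iff_eq_neg] at hsum
  rw [hsum, Finset.sup_eq_iSup]
  exact neg_mem (sum_mem_biSup fun i hi => hf i (Finset.mem_of_mem_erase hi))

theorem eq_zero_of_real_inner_self_le_mul_norm_mul_norm {E : Type*} [NormedAddCommGroup E]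
    [InnerProductSpace ℝ E] {x : E} {ρ : ℝ} (hρ : ρ < 1) (h : ⟪x, x⟫ ≤ ρ * ‖x‖ * ‖x‖) :
    x = 0 := by
  by_contra hx
  rw [real_inner_self_eq_norm_mul_norm] at h
  have := norm_pos_iff.mpr hx
  nlinarith [mul_pos this this]

theorem norms_of_projections_lemma2_general
    {E : Type*} [NormedAddCommGroup E] [InnerProductSpace ℝ E]
    (q qstar : ℕ) (hqstar : 0 < qstar)
    (H : Fin q → Submodule ℝ E)
    (ρ : ℝ) (hρ1 : ρ < 1)
    (hangle : ∀ J₁ J₂ : Finset (Fin q), Disjoint J₁ J₂ →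
      J₁.card ≤ qstar → J₂.card ≤ qstar →
      ∀ h₁ ∈ J₁.sup H, ∀ h₂ ∈ J₂.sup H, ⟪h₁, h₂⟫ ≤ ρ * ‖h₁‖ * ‖h₂‖)
    (J₀ : Finset (Fin q)) (hJ₀ : J₀.card ≤ qstar)
    (f : Fin q → E) (hfmem : ∀ j ∈ J₀, f j ∈ H j) (hfne : ∀ j ∈ J₀, f j ≠ 0) :
    (∀ J ⊆ J₀, J.Nonempty → ∑ j ∈ J, f j ≠ 0) ∧
    ∃ κ : ℝ, 0 < κ ∧ ∀ J ⊆ J₀, J.Nonempty → κ ≤ ‖∑ j ∈ J, f j‖ ^ 2 := by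
  -- A vanishing sum puts `f j₀` in both `H_{j₀}` and `H_{J \ {j₀}}`, so `‖f j₀‖² ≤ ρ ‖f j₀‖²`.
  have hne : ∀ J ⊆ J₀, J.Nonempty → ∑ j ∈ J, f j ≠ 0 := by
    rintro J hJ ⟨j₀, hj₀⟩ hsum
    have hmem_rest : f j₀ ∈ (J.erase j₀).sup H :=
      Submodule.mem_finset_sup_erase_of_sum_eq_zero (fun j hj => hfmem j (hJ hj)) hsum hj₀
    have hmem_single : f j₀ ∈ ({j₀} : Finset (Fin q)).sup H := by
      simpa using hfmem j₀ (hJ hj₀)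
    have hcard_rest : (J.erase j₀).card ≤ qstar :=
      (Finset.card_erase_le.trans (Finset.card_le_card hJ)).trans hJ₀
    refine hfne j₀ (hJ hj₀) (eq_zero_of_real_inner_self_le_mul_norm_mul_norm hρ1 ?_)
    exact hangle {j₀} (J.erase j₀) (Finset.disjoint_singleton_left.mpr (Finset.notMem_erase _ _))
      (by rwa [Finset.card_singleton]) hcard_rest _ hmem_single _ hmem_rest
  refine ⟨hne, ?_⟩
  obtain ⟨κ, hκ, hle⟩ := (J₀.powerset.filter Finset.Nonempty).exists_gt_forall_le_of_forall_gt
    (fun J => ‖∑ j ∈ J, f j‖ ^ 2) fun J hJ => by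
      rw [Finset.mem_filter, Finset.mem_powerset] at hJ
      exact pow_pos (norm_pos_iff.mpr (hne J hJ.1 hJ.2)) 2
  exact ⟨κ, hκ, fun J hJ hJne => hle J (Finset.mem_filter.mpr ⟨Finset.mem_powerset.mpr hJ, hJne⟩)⟩

/-- Lemma 2 of the paper: under the minimal-angle separation assumption,
for `J₀` of cardinality at most `q*` and nonzero components `f_j ∈ H_j` (`j ∈ J₀`),
every partial sum `∑_{j∈J} f_j` over a nonempty `J ⊆ J₀` is nonzero; in particular
the minimum `κ = min_{∅≠J⊆J₀} ‖∑_{j∈J} f_j‖²` is strictly positive. -/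
theorem norms_of_projections_lemma2
    {E : Type*} [NormedAddCommGroup E] [InnerProductSpace ℝ E]
    (q qstar : ℕ) (hq : 0 < q) (hqstar : 0 < qstar)
    (H : Fin q → Submodule ℝ E)
    (ρ : ℝ) (hρ0 : 0 ≤ ρ) (hρ1 : ρ < 1)
    (hangle : ∀ J₁ J₂ : Finset (Fin q), Disjoint J₁ J₂ →
      J₁.card ≤ qstar → J₂.card ≤ qstar →
      ∀ h₁ ∈ J₁.sup H, ∀ h₂ ∈ J₂.sup H, ⟪h₁, h₂⟫ ≤ ρ * ‖h₁‖ * ‖h₂‖)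
    (J₀ : Finset (Fin q)) (hJ₀ : J₀.card ≤ qstar)
    (f : Fin q → E) (hfmem : ∀ j ∈ J₀, f j ∈ H j) (hfne : ∀ j ∈ J₀, f j ≠ 0) :
    (∀ J ⊆ J₀, J.Nonempty → ∑ j ∈ J, f j ≠ 0) ∧
    ∃ κ : ℝ, 0 < κ ∧ ∀ J ⊆ J₀, J.Nonempty → κ ≤ ‖∑ j ∈ J, f j‖ ^ 2 :=
  norms_of_projections_lemma2_general q qstar hqstar H ρ hρ1 hangle J₀ hJ₀ f hfmem hfne
end

section
/- Let H be a real Hilbert space, let q and q* be positive integers, and let H₁, …, H_q be closed linear subspaces of H; for J ⊆ {1,…,q} write H_J = ∑_{j∈J} H_j and assume each H_J with |J| ≤ q* is a closed (complete) subspace, with orthogonal projection Π_J onto H_J. Assume there is ρ ∈ [0,1) such that for all disjoint subsets J₁, J₂ ⊆ {1,…,q} with |J₁|, |J₂| ≤ q* and all h₁ ∈ H_{J₁}, h₂ ∈ H_{J₂} one has ⟨h₁, h₂⟩ ≤ ρ‖h₁‖‖h₂‖. Let J₀ ⊆ {1,…,q} with |J₀| ≤ q*, let f_j ∈ H_j for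 j ∈ J₀, and set f = ∑_{j∈J₀} f_j. Let J ⊆ {1,…,q} with |J| ≤ q* and J₀ \ J ≠ ∅, and let l = |J₀ \ J|. Then ‖Π_{J₀} f‖² − ‖Π_J f‖² = ‖f − Π_J f‖² ≥ (1 − ρ²) κ_l, where κ_l = min_{J' ⊆ J₀, |J'| = l} ‖∑_{j∈J'} f_j‖². -/
/-!
Since `f ∈ H_{J₀}`, `Π_{J₀} f = f` and the identity is Pythagoras for `f = Π_J f + (f - Π_J f)`.
For the bound, split `f = f₁ + f₂` with `f₁ = ∑_{j ∈ J₀ \ J} f_j` and `f₂ ∈ H_J`; then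
`f - Π_J f = f₁ - h` with `h = Π_J f - f₂ ∈ H_J`, and the angle condition between the disjoint
index sets `J₀ \ J` and `J` gives `‖f₁ - h‖² ≥ ‖f₁‖² - 2ρ‖f₁‖‖h‖ + ‖h‖² ≥ (1 - ρ²)‖f₁‖²`.
Finally `‖f₁‖² ≥ κ_l` because `J₀ \ J` is one of the competitors in the minimum.
-/

open RealInnerProductSpace

theorem Submodule.sum_mem_finset_sup {R M ι : Type*} [Semiring R] [AddCommMonoid M] [Module R M]
    {s t : Finset ι} {p : ι → Submodule R M} {f : ι → M} (hst : s ⊆ t)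
    (hf : ∀ i ∈ s, f i ∈ p i) : ∑ i ∈ s, f i ∈ t.sup p :=
  Finset.sup_mono (f := p) hst <| (Finset.sup_eq_iSup s p) ▸ Submodule.sum_mem_biSup hf

section InnerProductSpace

variable {E : Type*} [NormedAddCommGroup E] [InnerProductSpace ℝ E]

theorem Submodule.eq_of_mem_of_sub_mem_orthogonal {K : Submodule ℝ E} {x p : E}
    (hx : x ∈ K) (hp : p ∈ K) (hxp : x - p ∈ Kᗮ) : p = x :=
  (sub_eq_zero.mp <| Submodule.disjoint_def.mp K.orthogonal_disjoint _ (K.sub_mem hx hp) hxp).symm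

theorem Submodule.norm_sq_eq_of_sub_mem_orthogonal {K : Submodule ℝ E} {x p : E}
    (hp : p ∈ K) (hxp : x - p ∈ Kᗮ) : ‖x‖ ^ 2 = ‖x - p‖ ^ 2 + ‖p‖ ^ 2 := by
  have hperp : ⟪x - p, p⟫ = 0 := K.inner_left_of_mem_orthogonal hp hxp
  simpa [hperp] using norm_add_sq_real (x - p) p

theorem one_sub_sq_mul_norm_sq_le_norm_sub_sq {u v : E} {ρ : ℝ}
    (huv : ⟪u, v⟫ ≤ ρ * ‖u‖ * ‖v‖) : (1 - ρ ^ 2) * ‖u‖ ^ 2 ≤ ‖u - v‖ ^ 2 := by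
  rw [norm_sub_sq_real]
  nlinarith [sq_nonneg (‖v‖ - ρ * ‖u‖)]

end InnerProductSpace

theorem norms_of_projections_proposition1_general
    {H : Type*} [NormedAddCommGroup H] [InnerProductSpace ℝ H]
    (q qstar : ℕ)
    (Hs : Fin q → Submodule ℝ H)
    (ρ : ℝ) (hρ0 : 0 ≤ ρ) (hρ1 : ρ < 1)
    (hangle : ∀ J₁ J₂ : Finset (Fin q), Disjoint J₁ J₂ →
      J₁.card ≤ qstar → J₂.card ≤ qstar →
      ∀ h₁ ∈ J₁.sup Hs, ∀ h₂ ∈ J₂.sup Hs, ⟪h₁, h₂⟫ ≤ ρ * ‖h₁‖ * ‖h₂‖)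
    (J₀ : Finset (Fin q)) (hJ₀ : J₀.card ≤ qstar)
    (fv : Fin q → H) (hfmem : ∀ j ∈ J₀, fv j ∈ Hs j)
    (f : H) (hf : f = ∑ j ∈ J₀, fv j)
    (J : Finset (Fin q)) (hJ : J.card ≤ qstar)
    (pJ₀ pJ : H)
    (hpJ₀mem : pJ₀ ∈ J₀.sup Hs) (hpJ₀orth : f - pJ₀ ∈ (J₀.sup Hs)ᗮ)
    (hpJmem : pJ ∈ J.sup Hs) (hpJorth : f - pJ ∈ (J.sup Hs)ᗮ) :
    ‖pJ₀‖ ^ 2 - ‖pJ‖ ^ 2 = ‖f - pJ‖ ^ 2 ∧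
    ‖f - pJ‖ ^ 2 ≥ (1 - ρ ^ 2) *
      sInf {x : ℝ | ∃ J' : Finset (Fin q), J' ⊆ J₀ ∧ J'.card = (J₀ \ J).card ∧
        x = ‖∑ j ∈ J', fv j‖ ^ 2} := by
  have hpJ₀ : pJ₀ = f := Submodule.eq_of_mem_of_sub_mem_orthogonal
    (hf ▸ Submodule.sum_mem_finset_sup subset_rfl hfmem) hpJ₀mem hpJ₀orth
  have hpyth := Submodule.norm_sq_eq_of_sub_mem_orthogonal hpJmem hpJorth
  refine ⟨by rw [hpJ₀, hpyth, add_sub_cancel_right], ?_⟩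
  set f₁ := ∑ j ∈ J₀ \ J, fv j
  set f₂ := ∑ j ∈ J₀ ∩ J, fv j
  have hf₁ : f₁ ∈ (J₀ \ J).sup Hs :=
    Submodule.sum_mem_finset_sup subset_rfl fun j hj ↦ hfmem j (Finset.mem_sdiff.mp hj).1
  have hf₂ : f₂ ∈ J.sup Hs :=
    Submodule.sum_mem_finset_sup Finset.inter_subset_right fun j hj ↦
      hfmem j (Finset.mem_inter.mp hj).1
  have hsplit : f - pJ = f₁ - (pJ - f₂) := by
    rw [hf, ← Finset.sum_inter_add_sum_sdiff J₀ J]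
    abel
  have hgap : (1 - ρ ^ 2) * ‖f₁‖ ^ 2 ≤ ‖f - pJ‖ ^ 2 := by
    rw [hsplit]
    exact one_sub_sq_mul_norm_sq_le_norm_sub_sq <|
      hangle _ _ Finset.sdiff_disjoint ((Finset.card_le_card Finset.sdiff_subset).trans hJ₀) hJ
        _ hf₁ _ ((J.sup Hs).sub_mem hpJmem hf₂)
  have hκ : sInf {x : ℝ | ∃ J' : Finset (Fin q), J' ⊆ J₀ ∧ J'.card = (J₀ \ J).card ∧
      x = ‖∑ j ∈ J', fv j‖ ^ 2} ≤ ‖f₁‖ ^ 2 :=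
    csInf_le ⟨0, by rintro _ ⟨_, _, _, rfl⟩; positivity⟩ ⟨J₀ \ J, Finset.sdiff_subset, rfl, rfl⟩
  have hρ : 0 ≤ 1 - ρ ^ 2 := by nlinarith
  exact (mul_le_mul_of_nonneg_left hκ hρ).trans hgap

/-- Proposition 1 of the paper (population-level selection criterion gap).
Orthogonal projections `Π_J f` onto the closed subspaces `H_J = ∑_{j∈J} H_j` are
encoded by their characteristic property: `p_J ∈ H_J` and `f - p_J ⊥ H_J`.
For `J` with `|J| ≤ q*` missing `l = |J₀ \ J|` relevant indices,
`‖Π_{J₀}f‖² − ‖Π_J f‖² = ‖f − Π_J f‖² ≥ (1 − ρ²)κ_l`, where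
`κ_l = min_{J'⊆J₀, |J'|=l} ‖∑_{j∈J'} f_j‖²` (written as an infimum). -/
theorem norms_of_projections_proposition1
    {H : Type*} [NormedAddCommGroup H] [InnerProductSpace ℝ H] [CompleteSpace H]
    (q qstar : ℕ) (hq : 0 < q) (hqstar : 0 < qstar)
    (Hs : Fin q → Submodule ℝ H) (hclosed : ∀ j, IsClosed (Hs j : Set H))
    (hcomplete : ∀ J : Finset (Fin q), J.card ≤ qstar → IsComplete ((J.sup Hs : Submodule ℝ H) : Set H))
    (ρ : ℝ) (hρ0 : 0 ≤ ρ) (hρ1 : ρ < 1)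
    (hangle : ∀ J₁ J₂ : Finset (Fin q), Disjoint J₁ J₂ →
      J₁.card ≤ qstar → J₂.card ≤ qstar →
      ∀ h₁ ∈ J₁.sup Hs, ∀ h₂ ∈ J₂.sup Hs, ⟪h₁, h₂⟫ ≤ ρ * ‖h₁‖ * ‖h₂‖)
    (J₀ : Finset (Fin q)) (hJ₀ : J₀.card ≤ qstar)
    (fv : Fin q → H) (hfmem : ∀ j ∈ J₀, fv j ∈ Hs j)
    (f : H) (hf : f = ∑ j ∈ J₀, fv j)
    (J : Finset (Fin q)) (hJ : J.card ≤ qstar) (hJmiss : (J₀ \ J).Nonempty)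
    (pJ₀ pJ : H)
    (hpJ₀mem : pJ₀ ∈ J₀.sup Hs) (hpJ₀orth : f - pJ₀ ∈ (J₀.sup Hs)ᗮ)
    (hpJmem : pJ ∈ J.sup Hs) (hpJorth : f - pJ ∈ (J.sup Hs)ᗮ) :
    ‖pJ₀‖ ^ 2 - ‖pJ‖ ^ 2 = ‖f - pJ‖ ^ 2 ∧
    ‖f - pJ‖ ^ 2 ≥ (1 - ρ ^ 2) *
      sInf {x : ℝ | ∃ J' : Finset (Fin q), J' ⊆ J₀ ∧ J'.card = (J₀ \ J).card ∧
        x = ‖∑ j ∈ J', fv j‖ ^ 2} :=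
  norms_of_projections_proposition1_general q qstar Hs ρ hρ0 hρ1 hangle J₀ hJ₀ fv hfmem f hf J hJ
    pJ₀ pJ hpJ₀mem hpJ₀orth hpJmem hpJorth
end

section
/- Let E be a real inner product space, let q and q* be positive integers, and let H₁, …, H_q be linear subspaces of E; for J ⊆ {1,…,q} write H_J = ∑_{j∈J} H_j. Then the following two conditions are equivalent: (i) there exists ρ ∈ [0,1) such that for all disjoint subsets J₁, J₂ ⊆ {1,…,q} with |J₁|, |J₂| ≤ q* and all h₁ ∈ H_{J₁}, h₂ ∈ H_{J₂} one has ⟨h₁, h₂⟩ ≤ ρ‖h₁‖‖h₂‖; (ii) there exists ε ∈ [0,1) such that for every J ⊆ {1,…,q} with |J| ≤ 2q* and all vectors f_j ∈ H_j (j ∈ J) one has ‖∑_{j∈J} f_j‖² ≥ (1 − ε) ∑_{j∈J} ‖f_j‖². -/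
/-!
For subspaces `V`, `W` and `0 ≤ ρ`, the angle bound `⟪a, b⟫ ≤ ρ ‖a‖ ‖b‖` on `V × W` is equivalent
to `(1 - ρ) (‖a‖² + ‖b‖²) ≤ ‖a + b‖²` (for the converse, rescale `a` and `b` to equal norms).

Given (i), adding the summands one at a time gives `(1 - ρ)^|J| ∑ ‖f j‖² ≤ ‖∑ f j‖²` for
`|J| ≤ q*`, and cutting a set of size `≤ 2q*` into two halves gives (ii) with
`1 - ε = (1 - ρ)^(q* + 1)`. Given (ii), write `h₁`, `h₂` as sums over `J₁`, `J₂`; Cauchy–Schwarz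
`‖∑_J g j‖² ≤ |J| ∑_J ‖g j‖²` turns (ii) into `(1 - ε) / q* (‖h₁‖² + ‖h₂‖²) ≤ ‖h₁ + h₂‖²`,
hence (i) with `1 - ρ = (1 - ε) / q*`.
-/

open RealInnerProductSpace

theorem Finset.exists_disjoint_union_eq_card_le {α : Type*} [DecidableEq α] {s : Finset α} {m : ℕ}
    (hs : s.card ≤ 2 * m) :
    ∃ t u : Finset α, Disjoint t u ∧ t ∪ u = s ∧ t.card ≤ m ∧ u.card ≤ m := by
  obtain ⟨t, hts, ht⟩ := s.exists_subset_card_eq (min_le_left s.card m)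
  refine ⟨t, s \ t, disjoint_sdiff, union_sdiff_of_subset hts, by omega, ?_⟩
  rw [card_sdiff_of_subset hts]
  omega

theorem norm_sum_sq_le_card_mul_sum_norm_sq {ι E : Type*} [SeminormedAddCommGroup E]
    (J : Finset ι) (g : ι → E) : ‖∑ j ∈ J, g j‖ ^ 2 ≤ J.card * ∑ j ∈ J, ‖g j‖ ^ 2 :=
  (pow_le_pow_left₀ (norm_nonneg _) (norm_sum_le _ _) 2).trans sq_sum_le_card_mul_sum_sq

section InnerProductSpace

variable {E : Type*} [NormedAddCommGroup E] [InnerProductSpace ℝ E]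

theorem forall_inner_le_iff_forall_norm_add_sq_ge {V W : Submodule ℝ E} {ρ : ℝ} (hρ : 0 ≤ ρ) :
    (∀ a ∈ V, ∀ b ∈ W, ⟪a, b⟫ ≤ ρ * ‖a‖ * ‖b‖) ↔
      ∀ a ∈ V, ∀ b ∈ W, (1 - ρ) * (‖a‖ ^ 2 + ‖b‖ ^ 2) ≤ ‖a + b‖ ^ 2 := by
  constructor
  · intro h a ha b hb
    have hab : -⟪a, b⟫ ≤ ρ * ‖a‖ * ‖b‖ := by
      simpa only [inner_neg_left, norm_neg] using h (-a) (V.neg_mem ha) b hb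
    nlinarith [norm_add_sq_real a b, mul_nonneg hρ (sq_nonneg (‖a‖ - ‖b‖))]
  · intro h a ha b hb
    rcases eq_or_ne a 0 with rfl | ha0
    · simp
    rcases eq_or_ne b 0 with rfl | hb0
    · simp
    have hN : 0 < ‖a‖ * ‖b‖ := by positivity
    have key := h (‖b‖ • a) (V.smul_mem _ ha) (-(‖a‖ • b)) (W.neg_mem (W.smul_mem _ hb))
    have hsq : ‖‖b‖ • a + -(‖a‖ • b)‖ ^ 2 =
        2 * (‖a‖ * ‖b‖) ^ 2 - 2 * (‖a‖ * ‖b‖) * ⟪a, b⟫ := by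
      rw [← sub_eq_add_neg, norm_sub_sq_real, norm_smul, norm_smul, real_inner_smul_left,
        real_inner_smul_right, norm_norm, norm_norm]
      ring
    rw [hsq, norm_neg, norm_smul, norm_smul, norm_norm, norm_norm] at key
    nlinarith

section Families

variable {ι : Type*} {H : ι → Submodule ℝ E}

theorem sum_mem_finset_sup {J : Finset ι} {f : ι → E} (hf : ∀ j ∈ J, f j ∈ H j) :
    ∑ j ∈ J, f j ∈ J.sup H := by
  rw [Finset.sup_eq_iSup]
  exact Submodule.sum_mem_biSup hf

theorem exists_sum_eq_of_mem_finset_sup {J : Finset ι} {x : E} (hx : x ∈ J.sup H) :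
    ∃ g : ι → E, (∀ j ∈ J, g j ∈ H j) ∧ ∑ j ∈ J, g j = x := by
  rw [Finset.sup_eq_iSup, Submodule.mem_iSup_finset_iff_exists_sum] at hx
  obtain ⟨μ, hμ⟩ := hx
  exact ⟨fun j => μ j, fun j _ => (μ j).2, hμ⟩

theorem exists_sum_eq_of_mem_finset_sup_of_disjoint [DecidableEq ι] {J₁ J₂ : Finset ι}
    (hJ : Disjoint J₁ J₂) {a b : E} (ha : a ∈ J₁.sup H) (hb : b ∈ J₂.sup H) :
    ∃ g : ι → E, (∀ j ∈ J₁ ∪ J₂, g j ∈ H j) ∧ ∑ j ∈ J₁, g j = a ∧ ∑ j ∈ J₂, g j = b := by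
  obtain ⟨g₁, hg₁, rfl⟩ := exists_sum_eq_of_mem_finset_sup ha
  obtain ⟨g₂, hg₂, rfl⟩ := exists_sum_eq_of_mem_finset_sup hb
  have hnot {j : ι} (hj : j ∈ J₂) : j ∉ J₁ := Finset.disjoint_right.mp hJ hj
  refine ⟨J₁.piecewise g₁ g₂, fun j hj => ?_, Finset.sum_congr rfl fun j hj => ?_,
    Finset.sum_congr rfl fun j hj => ?_⟩
  · by_cases hj₁ : j ∈ J₁
    · simpa [hj₁] using hg₁ j hj₁
    · simpa [hj₁] using hg₂ j ((Finset.mem_union.mp hj).resolve_left hj₁)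
  · simp [hj]
  · simp [hnot hj]

variable {m : ℕ}

section AngleToRiesz

variable [DecidableEq ι] {c : ℝ} (hc₀ : 0 ≤ c) (hc₁ : c ≤ 1)
  (hpair : ∀ J₁ J₂ : Finset ι, Disjoint J₁ J₂ → J₁.card ≤ m → J₂.card ≤ m →
    ∀ a ∈ J₁.sup H, ∀ b ∈ J₂.sup H, c * (‖a‖ ^ 2 + ‖b‖ ^ 2) ≤ ‖a + b‖ ^ 2)
include hc₀ hc₁ hpair

theorem pow_card_mul_sum_norm_sq_le {J : Finset ι} (hJ : J.card ≤ m) {f : ι → E}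
    (hf : ∀ j ∈ J, f j ∈ H j) : c ^ J.card * ∑ j ∈ J, ‖f j‖ ^ 2 ≤ ‖∑ j ∈ J, f j‖ ^ 2 := by
  induction J using Finset.induction_on with
  | empty => simp
  | insert j J hj ih =>
    rw [Finset.card_insert_of_notMem hj] at hJ ⊢
    rw [Finset.sum_insert hj, Finset.sum_insert hj]
    have hJ_ih := ih (by omega) fun i hi => hf i (Finset.mem_insert_of_mem hi)
    have hstep := hpair {j} J (Finset.disjoint_singleton_left.mpr hj)
      (by rw [Finset.card_singleton]; omega) (by omega)
      (f j) (by simpa using hf j (Finset.mem_insert_self j J))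
      (∑ i ∈ J, f i) (sum_mem_finset_sup fun i hi => hf i (Finset.mem_insert_of_mem hi))
    have hpow : c ^ J.card ≤ 1 := pow_le_one₀ hc₀ hc₁
    calc c ^ (J.card + 1) * (‖f j‖ ^ 2 + ∑ i ∈ J, ‖f i‖ ^ 2)
        = c * (c ^ J.card * ‖f j‖ ^ 2 + c ^ J.card * ∑ i ∈ J, ‖f i‖ ^ 2) := by ring
      _ ≤ c * (‖f j‖ ^ 2 + ‖∑ i ∈ J, f i‖ ^ 2) := by
        gcongr
        exact mul_le_of_le_one_left (sq_nonneg _) hpow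
      _ ≤ ‖f j + ∑ i ∈ J, f i‖ ^ 2 := hstep

theorem pow_succ_mul_sum_norm_sq_le {J : Finset ι} (hJ : J.card ≤ 2 * m) {f : ι → E}
    (hf : ∀ j ∈ J, f j ∈ H j) : c ^ (m + 1) * ∑ j ∈ J, ‖f j‖ ^ 2 ≤ ‖∑ j ∈ J, f j‖ ^ 2 := by
  obtain ⟨J₁, J₂, hdisj, rfl, h₁, h₂⟩ := Finset.exists_disjoint_union_eq_card_le hJ
  have hf₁ (j) (hj : j ∈ J₁) : f j ∈ H j := hf j (Finset.mem_union_left _ hj)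
  have hf₂ (j) (hj : j ∈ J₂) : f j ∈ H j := hf j (Finset.mem_union_right _ hj)
  have hpow₁ : c ^ m ≤ c ^ J₁.card := pow_le_pow_of_le_one hc₀ hc₁ h₁
  have hpow₂ : c ^ m ≤ c ^ J₂.card := pow_le_pow_of_le_one hc₀ hc₁ h₂
  rw [Finset.sum_union hdisj, Finset.sum_union hdisj]
  calc c ^ (m + 1) * (∑ j ∈ J₁, ‖f j‖ ^ 2 + ∑ j ∈ J₂, ‖f j‖ ^ 2)
      = c * (c ^ m * ∑ j ∈ J₁, ‖f j‖ ^ 2 + c ^ m * ∑ j ∈ J₂, ‖f j‖ ^ 2) := by ring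
    _ ≤ c * (c ^ J₁.card * ∑ j ∈ J₁, ‖f j‖ ^ 2 + c ^ J₂.card * ∑ j ∈ J₂, ‖f j‖ ^ 2) := by
      gcongr
    _ ≤ c * (‖∑ j ∈ J₁, f j‖ ^ 2 + ‖∑ j ∈ J₂, f j‖ ^ 2) := by
      gcongr
      · exact pow_card_mul_sum_norm_sq_le hc₀ hc₁ hpair h₁ hf₁
      · exact pow_card_mul_sum_norm_sq_le hc₀ hc₁ hpair h₂ hf₂
    _ ≤ ‖∑ j ∈ J₁, f j + ∑ j ∈ J₂, f j‖ ^ 2 :=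
      hpair J₁ J₂ hdisj h₁ h₂ _ (sum_mem_finset_sup hf₁) _ (sum_mem_finset_sup hf₂)

end AngleToRiesz

theorem div_mul_norm_add_sq_le [DecidableEq ι] {ε : ℝ} (hm : 0 < m) (hε : ε ≤ 1)
    (hriesz : ∀ J : Finset ι, J.card ≤ 2 * m → ∀ f : ι → E, (∀ j ∈ J, f j ∈ H j) →
      (1 - ε) * ∑ j ∈ J, ‖f j‖ ^ 2 ≤ ‖∑ j ∈ J, f j‖ ^ 2)
    {J₁ J₂ : Finset ι} (hJ : Disjoint J₁ J₂) (h₁ : J₁.card ≤ m) (h₂ : J₂.card ≤ m)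
    {a b : E} (ha : a ∈ J₁.sup H) (hb : b ∈ J₂.sup H) :
    (1 - ε) / m * (‖a‖ ^ 2 + ‖b‖ ^ 2) ≤ ‖a + b‖ ^ 2 := by
  obtain ⟨g, hg, rfl, rfl⟩ := exists_sum_eq_of_mem_finset_sup_of_disjoint hJ ha hb
  have hm' : (0 : ℝ) < m := by exact_mod_cast hm
  have hcs (J : Finset ι) (hJm : J.card ≤ m) : ‖∑ j ∈ J, g j‖ ^ 2 ≤ m * ∑ j ∈ J, ‖g j‖ ^ 2 :=
    (norm_sum_sq_le_card_mul_sum_norm_sq J g).trans (by gcongr)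
  have hunion := hriesz (J₁ ∪ J₂) (by rw [Finset.card_union_of_disjoint hJ]; omega) g hg
  rw [Finset.sum_union hJ, Finset.sum_union hJ] at hunion
  calc (1 - ε) / m * (‖∑ j ∈ J₁, g j‖ ^ 2 + ‖∑ j ∈ J₂, g j‖ ^ 2)
      ≤ (1 - ε) / m * (m * ∑ j ∈ J₁, ‖g j‖ ^ 2 + m * ∑ j ∈ J₂, ‖g j‖ ^ 2) := by
        have : 0 ≤ 1 - ε := by linarith
        gcongr
        · exact hcs J₁ h₁
        · exact hcs J₂ h₂
    _ = (1 - ε) * (∑ j ∈ J₁, ‖g j‖ ^ 2 + ∑ j ∈ J₂, ‖g j‖ ^ 2) := by field_simp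
    _ ≤ _ := hunion

end Families

end InnerProductSpace

theorem norms_of_projections_lemma3_general
    {E : Type*} [NormedAddCommGroup E] [InnerProductSpace ℝ E]
    (q qstar : ℕ) (hqstar : 0 < qstar)
    (H : Fin q → Submodule ℝ E) :
    (∃ ρ : ℝ, 0 ≤ ρ ∧ ρ < 1 ∧
      ∀ J₁ J₂ : Finset (Fin q), Disjoint J₁ J₂ →
        J₁.card ≤ qstar → J₂.card ≤ qstar →
        ∀ h₁ ∈ J₁.sup H, ∀ h₂ ∈ J₂.sup H, ⟪h₁, h₂⟫ ≤ ρ * ‖h₁‖ * ‖h₂‖) ↔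
    (∃ ε : ℝ, 0 ≤ ε ∧ ε < 1 ∧
      ∀ J : Finset (Fin q), J.card ≤ 2 * qstar →
        ∀ f : Fin q → E, (∀ j ∈ J, f j ∈ H j) →
          ‖∑ j ∈ J, f j‖ ^ 2 ≥ (1 - ε) * ∑ j ∈ J, ‖f j‖ ^ 2) := by
  constructor
  · rintro ⟨ρ, hρ₀, hρ₁, hangle⟩
    have hc : 0 < 1 - ρ := by linarith
    have hpow : (1 - ρ) ^ (qstar + 1) ≤ 1 := pow_le_one₀ hc.le (by linarith)
    refine ⟨1 - (1 - ρ) ^ (qstar + 1), by linarith, by linarith [pow_pos hc (qstar + 1)],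
      fun J hJ f hf => ?_⟩
    rw [sub_sub_cancel]
    exact pow_succ_mul_sum_norm_sq_le hc.le (by linarith)
      (fun J₁ J₂ hJ h₁ h₂ => (forall_inner_le_iff_forall_norm_add_sq_ge hρ₀).mp
        (hangle J₁ J₂ hJ h₁ h₂)) hJ hf
  · rintro ⟨ε, hε₀, hε₁, hriesz⟩
    have hq : (1 : ℝ) ≤ qstar := by exact_mod_cast hqstar
    have hδ : 0 < (1 - ε) / qstar := div_pos (by linarith) (by linarith)
    have hρ₀ : 0 ≤ 1 - (1 - ε) / qstar := by
      rw [sub_nonneg, div_le_one (by linarith)]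
      linarith
    refine ⟨1 - (1 - ε) / qstar, hρ₀, by linarith, fun J₁ J₂ hJ h₁ h₂ => ?_⟩
    rw [forall_inner_le_iff_forall_norm_add_sq_ge hρ₀, sub_sub_cancel]
    exact fun a ha b hb => div_mul_norm_add_sq_le hqstar hε₁.le hriesz hJ h₁ h₂ ha hb

/-- Lemma 3 of the paper: the minimal-angle condition with constant `ρ_{q*} < 1`
holds if and only if the restricted-eigenvalue-type condition with constant
`ε_{2q*} < 1` holds. -/
theorem norms_of_projections_lemma3
    {E : Type*} [NormedAddCommGroup E] [InnerProductSpace ℝ E]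
    (q qstar : ℕ) (hq : 0 < q) (hqstar : 0 < qstar)
    (H : Fin q → Submodule ℝ E) :
    (∃ ρ : ℝ, 0 ≤ ρ ∧ ρ < 1 ∧
      ∀ J₁ J₂ : Finset (Fin q), Disjoint J₁ J₂ →
        J₁.card ≤ qstar → J₂.card ≤ qstar →
        ∀ h₁ ∈ J₁.sup H, ∀ h₂ ∈ J₂.sup H, ⟪h₁, h₂⟫ ≤ ρ * ‖h₁‖ * ‖h₂‖) ↔
    (∃ ε : ℝ, 0 ≤ ε ∧ ε < 1 ∧
      ∀ J : Finset (Fin q), J.card ≤ 2 * qstar →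
        ∀ f : Fin q → E, (∀ j ∈ J, f j ∈ H j) →
          ‖∑ j ∈ J, f j‖ ^ 2 ≥ (1 - ε) * ∑ j ∈ J, ‖f j‖ ^ 2) :=
  norms_of_projections_lemma3_general q qstar hqstar H
end

section
/- Let E be a real inner product space, let q and q* be positive integers, and let H₁, …, H_q be linear subspaces of E. Let ε, ε' ≥ 0 with ε < 1 and suppose: (a) for every J ⊆ {1,…,q} with |J| ≤ 2q* and all f_j ∈ H_j (j ∈ J), ‖∑_{j∈J} f_j‖² ≥ (1 − ε) ∑_{j∈J} ‖f_j‖²; (b) for every J ⊆ {1,…,q} with |J| ≤ q* and all f_j ∈ H_j (j ∈ J), ‖∑_{j∈J} f_j‖² ≤ (1 + ε') ∑_{j∈J} ‖f_j‖². Then for all disjoint subsets J₁, J₂ ⊆ {1,…,q} with |J₁|, |J₂| ≤ q* and all f_j ∈ H_j (j ∈ J₁ ∪ J₂) one has ‖∑_{j∈J₁∪J₂} f_j‖² ≥ ((1 − ε)/(1 + ε')) (‖∑_{j∈J₁} f_j‖² + ‖∑_{j∈J₂} f_j‖²). -/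
open Finset

theorem norms_of_projections_appendixB_general
    {E : Type*} [NormedAddCommGroup E] [InnerProductSpace ℝ E]
    (q qstar : ℕ)
    (H : Fin q → Submodule ℝ E)
    (ε ε' : ℝ) (hε1 : ε < 1) (hε'0 : 0 ≤ ε')
    (hlow : ∀ J : Finset (Fin q), J.card ≤ 2 * qstar →
      ∀ f : Fin q → E, (∀ j ∈ J, f j ∈ H j) →
        ‖∑ j ∈ J, f j‖ ^ 2 ≥ (1 - ε) * ∑ j ∈ J, ‖f j‖ ^ 2)
    (hup : ∀ J : Finset (Fin q), J.card ≤ qstar →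
      ∀ f : Fin q → E, (∀ j ∈ J, f j ∈ H j) →
        ‖∑ j ∈ J, f j‖ ^ 2 ≤ (1 + ε') * ∑ j ∈ J, ‖f j‖ ^ 2) :
    ∀ J₁ J₂ : Finset (Fin q), Disjoint J₁ J₂ →
      J₁.card ≤ qstar → J₂.card ≤ qstar →
      ∀ f : Fin q → E, (∀ j ∈ J₁ ∪ J₂, f j ∈ H j) →
        ‖∑ j ∈ J₁ ∪ J₂, f j‖ ^ 2 ≥
          ((1 - ε) / (1 + ε')) * (‖∑ j ∈ J₁, f j‖ ^ 2 + ‖∑ j ∈ J₂, f j‖ ^ 2) := by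
  intro J₁ J₂ hdisj hcard₁ hcard₂ f hf
  have hpos : 0 < 1 + ε' := by linarith
  have hup_div : ∀ J ⊆ J₁ ∪ J₂, J.card ≤ qstar →
      ‖∑ j ∈ J, f j‖ ^ 2 / (1 + ε') ≤ ∑ j ∈ J, ‖f j‖ ^ 2 := fun J hJ hcard =>
    (div_le_iff₀' hpos).mpr (hup J hcard f fun j hj => hf j (hJ hj))
  have hcard : (J₁ ∪ J₂).card ≤ 2 * qstar := (card_union_le J₁ J₂).trans (by omega)
  calc (1 - ε) / (1 + ε') * (‖∑ j ∈ J₁, f j‖ ^ 2 + ‖∑ j ∈ J₂, f j‖ ^ 2)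
      = (1 - ε) * (‖∑ j ∈ J₁, f j‖ ^ 2 / (1 + ε') + ‖∑ j ∈ J₂, f j‖ ^ 2 / (1 + ε')) := by
        ring
    _ ≤ (1 - ε) * (∑ j ∈ J₁, ‖f j‖ ^ 2 + ∑ j ∈ J₂, ‖f j‖ ^ 2) := by
        have := sub_nonneg.mpr hε1.le
        gcongr
        · exact hup_div J₁ subset_union_left hcard₁
        · exact hup_div J₂ subset_union_right hcard₂
    _ = (1 - ε) * ∑ j ∈ J₁ ∪ J₂, ‖f j‖ ^ 2 := by rw [sum_union hdisj]
    _ ≤ ‖∑ j ∈ J₁ ∪ J₂, f j‖ ^ 2 := hlow _ hcard f hf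

/-- The quantitative inequality of Appendix B of the paper: under the lower
restricted-isometry bound with constant `1 − ε` (order `2q*`) and the upper bound
with constant `1 + ε'` (order `q*`), disjointly supported additive functions satisfy
`‖f_{J₁} + f_{J₂}‖² ≥ ((1 − ε)/(1 + ε'))(‖f_{J₁}‖² + ‖f_{J₂}‖²)`. -/
theorem norms_of_projections_appendixB
    {E : Type*} [NormedAddCommGroup E] [InnerProductSpace ℝ E]
    (q qstar : ℕ) (hq : 0 < q) (hqstar : 0 < qstar)
    (H : Fin q → Submodule ℝ E)
    (ε ε' : ℝ) (hε0 : 0 ≤ ε) (hε1 : ε < 1) (hε'0 : 0 ≤ ε')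
    (hlow : ∀ J : Finset (Fin q), J.card ≤ 2 * qstar →
      ∀ f : Fin q → E, (∀ j ∈ J, f j ∈ H j) →
        ‖∑ j ∈ J, f j‖ ^ 2 ≥ (1 - ε) * ∑ j ∈ J, ‖f j‖ ^ 2)
    (hup : ∀ J : Finset (Fin q), J.card ≤ qstar →
      ∀ f : Fin q → E, (∀ j ∈ J, f j ∈ H j) →
        ‖∑ j ∈ J, f j‖ ^ 2 ≤ (1 + ε') * ∑ j ∈ J, ‖f j‖ ^ 2) :
    ∀ J₁ J₂ : Finset (Fin q), Disjoint J₁ J₂ →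
      J₁.card ≤ qstar → J₂.card ≤ qstar →
      ∀ f : Fin q → E, (∀ j ∈ J₁ ∪ J₂, f j ∈ H j) →
        ‖∑ j ∈ J₁ ∪ J₂, f j‖ ^ 2 ≥
          ((1 - ε) / (1 + ε')) * (‖∑ j ∈ J₁, f j‖ ^ 2 + ‖∑ j ∈ J₂, f j‖ ^ 2) :=
  norms_of_projections_appendixB_general q qstar H ε ε' hε1 hε'0 hlow hup
end

section
/- Let E be a real inner product space, let A and B be linear subspaces of E, and let N : E → ℝ be a nonnegative function. Let δ ∈ (0,1) and ρ ∈ [0,1). Assume: (i) (1 − δ)‖g‖² ≤ N(g)² ≤ (1 + δ)‖g‖² for all g ∈ A + B; (ii) ‖a + b‖² ≥ (1 − ρ²)‖a‖² for all a ∈ A and b ∈ B. Then for all a ∈ A and b ∈ B, N(a + b)² ≥ ((1 − δ)/(1 + δ)) (1 − ρ²) N(a)². -/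
theorem div_mul_mul_le_of_comparison {l u κ x y m n : ℝ} (hl : 0 ≤ l) (hu : 0 < u) (hκ : 0 ≤ κ)
    (hm : m ≤ u * y) (hxy : κ * y ≤ x) (hn : l * x ≤ n) :
    l / u * κ * m ≤ n :=
  calc l / u * κ * m
      ≤ l / u * κ * (u * y) := by gcongr
    _ = l * (κ * y) := by field_simp
    _ ≤ l * x := by gcongr
    _ ≤ n := hn

theorem norms_of_projections_lemma6_general
    {E : Type*} [NormedAddCommGroup E] [InnerProductSpace ℝ E]
    (A B : Submodule ℝ E) (N : E → ℝ)
    (δ ρ : ℝ) (hδ0 : 0 < δ) (hδ1 : δ < 1) (hρ0 : 0 ≤ ρ) (hρ1 : ρ < 1)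
    (hemp : ∀ g ∈ A ⊔ B, (1 - δ) * ‖g‖ ^ 2 ≤ (N g) ^ 2 ∧ (N g) ^ 2 ≤ (1 + δ) * ‖g‖ ^ 2)
    (hangle : ∀ a ∈ A, ∀ b ∈ B, ‖a + b‖ ^ 2 ≥ (1 - ρ ^ 2) * ‖a‖ ^ 2) :
    ∀ a ∈ A, ∀ b ∈ B,
      (N (a + b)) ^ 2 ≥ ((1 - δ) / (1 + δ)) * (1 - ρ ^ 2) * (N a) ^ 2 := by
  intro a ha b hb
  have ha' : a ∈ A ⊔ B := Submodule.mem_sup_left ha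
  have hab : a + b ∈ A ⊔ B := add_mem ha' (Submodule.mem_sup_right hb)
  exact div_mul_mul_le_of_comparison (by linarith) (by linarith)
    (sub_nonneg.2 (pow_le_one₀ hρ0 hρ1.le)) (hemp a ha').2 (hangle a ha b hb) (hemp _ hab).1

/-- Lemma 6 of the paper: if the nonnegative function `N` (the empirical norm)
satisfies `(1−δ)‖g‖² ≤ N(g)² ≤ (1+δ)‖g‖²` on `A + B` and the angle separation
`‖a + b‖² ≥ (1 − ρ²)‖a‖²` holds, then
`N(a + b)² ≥ ((1−δ)/(1+δ))(1 − ρ²) N(a)²` for all `a ∈ A`, `b ∈ B`. -/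
theorem norms_of_projections_lemma6
    {E : Type*} [NormedAddCommGroup E] [InnerProductSpace ℝ E]
    (A B : Submodule ℝ E) (N : E → ℝ) (hN : ∀ g, 0 ≤ N g)
    (δ ρ : ℝ) (hδ0 : 0 < δ) (hδ1 : δ < 1) (hρ0 : 0 ≤ ρ) (hρ1 : ρ < 1)
    (hemp : ∀ g ∈ A ⊔ B, (1 - δ) * ‖g‖ ^ 2 ≤ (N g) ^ 2 ∧ (N g) ^ 2 ≤ (1 + δ) * ‖g‖ ^ 2)
    (hangle : ∀ a ∈ A, ∀ b ∈ B, ‖a + b‖ ^ 2 ≥ (1 - ρ ^ 2) * ‖a‖ ^ 2) :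
    ∀ a ∈ A, ∀ b ∈ B,
      (N (a + b)) ^ 2 ≥ ((1 - δ) / (1 + δ)) * (1 - ρ ^ 2) * (N a) ^ 2 :=
  norms_of_projections_lemma6_general A B N δ ρ hδ0 hδ1 hρ0 hρ1 hemp hangle
end

section
/- Let H be a real Hilbert space, let U and V be complete (closed) linear subspaces of H with orthogonal projections P onto U and Q onto V. Let f, v ∈ H with v ∈ U (so Pv = v). Then ‖Pf‖² − ‖Qf‖² ≥ (2/3)(‖Pv‖² − ‖Qv‖²) − 4‖f − v‖². -/
/-! With `p = ‖f - Pf‖`, `q = ‖f - Qf‖`, `t = ‖v - Qv‖` and `ε = ‖f - v‖`, Pythagoras turns the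
inequality into `q² - p² ≥ (2/3) t² - 4ε²`. Minimality of orthogonal projections gives `p ≤ ε`
(as `v ∈ U`) and `t ≤ ‖v - Qf‖ ≤ q + ε`, and `(2/3)(q + ε)² ≤ q² + 2ε²` is AM-GM. -/

namespace Submodule

variable {𝕜 E : Type*} [RCLike 𝕜] [NormedAddCommGroup E] [InnerProductSpace 𝕜 E]
  (K : Submodule 𝕜 E) [K.HasOrthogonalProjection]

theorem norm_sub_starProjection_le (x : E) {w : E} (hw : w ∈ K) :
    ‖x - K.starProjection x‖ ≤ ‖x - w‖ := by
  rw [starProjection_minimal]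
  exact ciInf_le ⟨0, Set.forall_mem_range.mpr fun _ => norm_nonneg _⟩ (⟨w, hw⟩ : K)

theorem norm_starProjection_sq (x : E) :
    ‖K.starProjection x‖ ^ 2 = ‖x‖ ^ 2 - ‖x - K.starProjection x‖ ^ 2 := by
  rw [K.norm_sq_eq_add_norm_sq_starProjection x, starProjection_orthogonal_val]
  ring

end Submodule

theorem two_thirds_mul_sq_le_of_le_add {t q ε : ℝ} (ht : 0 ≤ t) (htq : t ≤ q + ε) :
    2 / 3 * t ^ 2 ≤ q ^ 2 + 2 * ε ^ 2 := by
  nlinarith [sq_nonneg (q - 2 * ε), pow_le_pow_left₀ ht htq 2]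

/-- The key inequality (G.3) of Appendix G of the paper: for orthogonal projections
`P`, `Q` onto complete subspaces `U`, `V` of a real Hilbert space and `v ∈ U`,
`‖Pf‖² − ‖Qf‖² ≥ (2/3)(‖Pv‖² − ‖Qv‖²) − 4‖f − v‖²`. -/
theorem norms_of_projections_appendixG
    {H : Type*} [NormedAddCommGroup H] [InnerProductSpace ℝ H]
    (U V : Submodule ℝ H) [CompleteSpace U] [CompleteSpace V]
    (f v : H) (hv : v ∈ U) :
    ‖(U.orthogonalProjectionOnto f : H)‖ ^ 2 - ‖(V.orthogonalProjectionOnto f : H)‖ ^ 2 ≥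
      (2 / 3 : ℝ) * (‖(U.orthogonalProjectionOnto v : H)‖ ^ 2 -
        ‖(V.orthogonalProjectionOnto v : H)‖ ^ 2) - 4 * ‖f - v‖ ^ 2 := by
  simp only [Submodule.coe_orthogonalProjectionOnto_apply]
  rw [U.norm_starProjection_sq f, V.norm_starProjection_sq f, V.norm_starProjection_sq v,
    Submodule.starProjection_eq_self_iff.mpr hv]
  have hp : ‖f - U.starProjection f‖ ≤ ‖f - v‖ := U.norm_sub_starProjection_le f hv
  have ht : ‖v - V.starProjection v‖ ≤ ‖f - V.starProjection f‖ + ‖f - v‖ :=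
    calc ‖v - V.starProjection v‖ ≤ ‖v - V.starProjection f‖ :=
          V.norm_sub_starProjection_le v (V.starProjection_apply_mem f)
      _ ≤ ‖f - V.starProjection f‖ + ‖f - v‖ := by
          rw [norm_sub_rev f v]
          exact norm_sub_le_norm_sub_add_norm_sub v f _ |>.trans_eq (add_comm _ _)
  have hAMGM := two_thirds_mul_sq_le_of_le_add (norm_nonneg _) ht
  have hp2 := pow_le_pow_left₀ (norm_nonneg _) hp 2
  linarith [sq_nonneg ‖f - v‖]
end

section
/- Let E be a real Hilbert space, let q and q* be positive integers, and let W₁, …, W_q be finite-dimensional linear subspaces of E; for J ⊆ {1,…,q} write W_J = ∑_{j∈J} W_j and let P_J denote the orthogonal projection of E onto W_J. Assume there is ρ ∈ [0,1) such that for all disjoint subsets J₁, J₂ ⊆ {1,…,q} with |J₁|, |J₂| ≤ q* and all w₁ ∈ W_{J₁}, w₂ ∈ W_{J₂} one has ⟨w₁, w₂⟩ ≤ ρ‖w₁‖‖w₂‖. Let J₀ ⊆ {1,…,q} with |J₀| ≤ q*, let v_j ∈ W_j with v_j ≠ 0 for all j ∈ J₀, and set f = ∑_{j∈J₀} v_j.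 Then for every J ⊆ {1,…,q} with |J| ≤ q* and J₀ ⊄ J one has ‖P_J f‖² < ‖P_{J₀} f‖². Consequently, every subset J* ⊆ {1,…,q} with |J*| ≤ q* that maximizes J ↦ ‖P_J f‖² over all subsets of cardinality at most q* satisfies J₀ ⊆ J*. -/
/-! If `J₀ ⊄ J`, then `f ∉ W_J`: otherwise the part `∑_{j ∈ J₀ \ J} v_j` of `f` would lie in both
`W_{J₀ \ J}` and `W_J`, which the angle condition (with `ρ < 1`) forces to meet only in `0`, and a
vanishing sum of nonzero `v_j` contradicts the same condition for `{j}` and the remaining indices.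
Hence `f - P_J f ≠ 0`, and Pythagoras gives `‖P_J f‖² < ‖f‖² = ‖P_{J₀} f‖²`. -/

open RealInnerProductSpace

section Projection

variable {𝕜 E : Type*} [RCLike 𝕜] [NormedAddCommGroup E] [InnerProductSpace 𝕜 E]
  {K : Submodule 𝕜 E} {f p : E}

theorem eq_of_mem_of_sub_mem_orthogonal (hf : f ∈ K) (hp : p ∈ K) (horth : f - p ∈ Kᗮ) :
    p = f :=
  (sub_eq_zero.mp (Submodule.disjoint_def.mp K.orthogonal_disjoint _ (K.sub_mem hf hp) horth)).symm

end Projection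

theorem norm_sq_lt_of_sub_mem_orthogonal {E : Type*} [NormedAddCommGroup E]
    [InnerProductSpace ℝ E] {K : Submodule ℝ E} {f p : E} (hp : p ∈ K) (horth : f - p ∈ Kᗮ)
    (hf : f ∉ K) : ‖p‖ ^ 2 < ‖f‖ ^ 2 := by
  have hpyth : ‖f‖ * ‖f‖ = ‖p‖ * ‖p‖ + ‖f - p‖ * ‖f - p‖ := by
    simpa using norm_add_sq_eq_norm_sq_add_norm_sq_real (K.inner_right_of_mem_orthogonal hp horth)
  have hne : f - p ≠ 0 := fun h ↦ hf (sub_eq_zero.mp h ▸ hp)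
  have hpos : 0 < ‖f - p‖ := norm_pos_iff.mpr hne
  nlinarith

theorem eq_zero_of_inner_self_le_mul_norm {E : Type*} [NormedAddCommGroup E]
    [InnerProductSpace ℝ E] {ρ : ℝ} (hρ : ρ < 1) {x : E} (h : ⟪x, x⟫ ≤ ρ * ‖x‖ * ‖x‖) :
    x = 0 := by
  rw [real_inner_self_eq_norm_mul_norm] at h
  by_contra hx
  have hpos : 0 < ‖x‖ := norm_pos_iff.mpr hx
  nlinarith [mul_pos hpos hpos]

theorem Finset.sum_mem_sup {R M ι : Type*} [Semiring R] [AddCommMonoid M] [Module R M]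
    {W : ι → Submodule R M} {s : Finset ι} {v : ι → M} (h : ∀ i ∈ s, v i ∈ W i) :
    ∑ i ∈ s, v i ∈ s.sup W := by
  rw [Finset.sup_eq_iSup]
  exact Submodule.sum_mem_biSup h

section DisjointSups

variable {R M ι : Type*} [Ring R] [AddCommGroup M] [Module R M]

/-- For `n` at least the number of indices, this is `iSupIndep W`. -/
def DisjointSupsOfCardLE (W : ι → Submodule R M) (n : ℕ) : Prop :=
  ∀ J₁ J₂ : Finset ι, Disjoint J₁ J₂ → J₁.card ≤ n → J₂.card ≤ n → Disjoint (J₁.sup W) (J₂.sup W)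

theorem disjointSupsOfCardLE_of_inner_le {E : Type*} [NormedAddCommGroup E]
    [InnerProductSpace ℝ E] {W : ι → Submodule ℝ E} {n : ℕ} {ρ : ℝ} (hρ : ρ < 1)
    (hangle : ∀ J₁ J₂ : Finset ι, Disjoint J₁ J₂ → J₁.card ≤ n → J₂.card ≤ n →
      ∀ w₁ ∈ J₁.sup W, ∀ w₂ ∈ J₂.sup W, ⟪w₁, w₂⟫ ≤ ρ * ‖w₁‖ * ‖w₂‖) :
    DisjointSupsOfCardLE W n := fun J₁ J₂ hJ h₁ h₂ ↦
  Submodule.disjoint_def.mpr fun x hx₁ hx₂ ↦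
    eq_zero_of_inner_self_le_mul_norm hρ (hangle J₁ J₂ hJ h₁ h₂ x hx₁ x hx₂)

namespace DisjointSupsOfCardLE

variable [DecidableEq ι] {W : ι → Submodule R M} {n : ℕ} {v : ι → M}

theorem sum_ne_zero (hW : DisjointSupsOfCardLE W n) {s : Finset ι} (hs : s.Nonempty)
    (hsn : s.card ≤ n) (hvmem : ∀ j ∈ s, v j ∈ W j) (hvne : ∀ j ∈ s, v j ≠ 0) :
    ∑ j ∈ s, v j ≠ 0 := by
  obtain ⟨j, hj⟩ := hs
  intro hsum
  have hvj : v j = -∑ i ∈ s.erase j, v i :=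
    eq_neg_of_add_eq_zero_left ((Finset.add_sum_erase s v hj).trans hsum)
  have hvj_rest : v j ∈ (s.erase j).sup W := hvj ▸ Submodule.neg_mem _
    (Finset.sum_mem_sup fun i hi ↦ hvmem i (Finset.mem_of_mem_erase hi))
  have hvj_single : v j ∈ ({j} : Finset ι).sup W := by
    simpa using hvmem j hj
  refine hvne j hj (Submodule.disjoint_def.mp (hW _ _ ?_ ?_ ?_) _ hvj_single hvj_rest)
  · exact Finset.disjoint_singleton_left.mpr (Finset.notMem_erase j s)
  · exact (Finset.card_le_card (Finset.singleton_subset_iff.mpr hj)).trans hsn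
  · exact Finset.card_erase_le.trans hsn

theorem subset_of_sum_mem_sup (hW : DisjointSupsOfCardLE W n) {J₀ J : Finset ι}
    (hJ₀ : J₀.card ≤ n) (hJ : J.card ≤ n) (hvmem : ∀ j ∈ J₀, v j ∈ W j)
    (hvne : ∀ j ∈ J₀, v j ≠ 0) (hsum : ∑ j ∈ J₀, v j ∈ J.sup W) : J₀ ⊆ J := by
  have hdiff_card : (J₀ \ J).card ≤ n := (Finset.card_le_card Finset.sdiff_subset).trans hJ₀
  have hdiff_mem : ∀ j ∈ J₀ \ J, v j ∈ W j := fun j hj ↦ hvmem j (Finset.mem_sdiff.mp hj).1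
  have hdiff_eq : ∑ j ∈ J₀ \ J, v j = ∑ j ∈ J₀, v j - ∑ j ∈ J₀ ∩ J, v j :=
    eq_sub_of_add_eq' (Finset.sum_inter_add_sum_sdiff J₀ J v)
  have hinter_J : ∑ j ∈ J₀ ∩ J, v j ∈ J.sup W :=
    Submodule.sum_mem _ fun j hj ↦ Finset.le_sup (f := W) (Finset.mem_inter.mp hj).2
      (hvmem j (Finset.mem_inter.mp hj).1)
  have hdiff_J : ∑ j ∈ J₀ \ J, v j ∈ J.sup W := hdiff_eq ▸ Submodule.sub_mem _ hsum hinter_J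
  have hdiff_zero : ∑ j ∈ J₀ \ J, v j = 0 := Submodule.disjoint_def.mp
    (hW _ _ Finset.sdiff_disjoint hdiff_card hJ) _ (Finset.sum_mem_sup hdiff_mem) hdiff_J
  by_contra hJ₀J
  exact hW.sum_ne_zero (Finset.sdiff_nonempty.mpr hJ₀J) hdiff_card hdiff_mem
    (fun j hj ↦ hvne j (Finset.mem_sdiff.mp hj).1) hdiff_zero

end DisjointSupsOfCardLE

end DisjointSups

theorem norms_of_projections_noiseless_selection_general
    {E : Type*} [NormedAddCommGroup E] [InnerProductSpace ℝ E]
    (q qstar : ℕ)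
    (W : Fin q → Submodule ℝ E)
    (ρ : ℝ) (hρ1 : ρ < 1)
    (hangle : ∀ J₁ J₂ : Finset (Fin q), Disjoint J₁ J₂ →
      J₁.card ≤ qstar → J₂.card ≤ qstar →
      ∀ w₁ ∈ J₁.sup W, ∀ w₂ ∈ J₂.sup W, ⟪w₁, w₂⟫ ≤ ρ * ‖w₁‖ * ‖w₂‖)
    (J₀ : Finset (Fin q)) (hJ₀ : J₀.card ≤ qstar)
    (v : Fin q → E) (hvmem : ∀ j ∈ J₀, v j ∈ W j) (hvne : ∀ j ∈ J₀, v j ≠ 0)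
    (f : E) (hf : f = ∑ j ∈ J₀, v j)
    (P : Finset (Fin q) → E)
    (hPmem : ∀ J : Finset (Fin q), P J ∈ J.sup W)
    (hPorth : ∀ J : Finset (Fin q), f - P J ∈ (J.sup W)ᗮ) :
    (∀ J : Finset (Fin q), J.card ≤ qstar → ¬ J₀ ⊆ J → ‖P J‖ ^ 2 < ‖P J₀‖ ^ 2) ∧
    (∀ Jstar : Finset (Fin q), Jstar.card ≤ qstar →
      (∀ J : Finset (Fin q), J.card ≤ qstar → ‖P J‖ ^ 2 ≤ ‖P Jstar‖ ^ 2) →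
      J₀ ⊆ Jstar) := by
  have hW : DisjointSupsOfCardLE W qstar := disjointSupsOfCardLE_of_inner_le hρ1 hangle
  have hPJ₀ : P J₀ = f :=
    eq_of_mem_of_sub_mem_orthogonal (hf ▸ Finset.sum_mem_sup hvmem) (hPmem J₀) (hPorth J₀)
  have hlt : ∀ J : Finset (Fin q), J.card ≤ qstar → ¬ J₀ ⊆ J → ‖P J‖ ^ 2 < ‖P J₀‖ ^ 2 := by
    intro J hJ hJ₀J
    rw [hPJ₀]
    refine norm_sq_lt_of_sub_mem_orthogonal (hPmem J) (hPorth J) fun hfJ ↦ hJ₀J ?_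
    exact hW.subset_of_sum_mem_sup hJ₀ hJ hvmem hvne (hf ▸ hfJ)
  refine ⟨hlt, fun Jstar hJstar hmax ↦ ?_⟩
  by_contra hJ₀Jstar
  exact (hlt Jstar hJstar hJ₀Jstar).not_ge (hmax J₀ hJ₀)

/-- The noiseless/parametric core of the paper's variable selection criterion:
under the minimal-angle separation assumption, with `f = ∑_{j∈J₀} v_j` and `v_j ≠ 0`,
orthogonal projections `P_J f` onto `W_J = ∑_{j∈J} W_j` (encoded via their
characteristic property `P J ∈ W_J`, `f − P J ⊥ W_J`) satisfy
`‖P_J f‖² < ‖P_{J₀} f‖²` whenever `|J| ≤ q*` and `J₀ ⊄ J`; consequently any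
maximizer `J*` of `J ↦ ‖P_J f‖²` over subsets of cardinality at most `q*`
contains `J₀`. -/
theorem norms_of_projections_noiseless_selection
    {E : Type*} [NormedAddCommGroup E] [InnerProductSpace ℝ E] [CompleteSpace E]
    (q qstar : ℕ) (hq : 0 < q) (hqstar : 0 < qstar)
    (W : Fin q → Submodule ℝ E) (hfd : ∀ j, FiniteDimensional ℝ (W j))
    (ρ : ℝ) (hρ0 : 0 ≤ ρ) (hρ1 : ρ < 1)
    (hangle : ∀ J₁ J₂ : Finset (Fin q), Disjoint J₁ J₂ →
      J₁.card ≤ qstar → J₂.card ≤ qstar →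
      ∀ w₁ ∈ J₁.sup W, ∀ w₂ ∈ J₂.sup W, ⟪w₁, w₂⟫ ≤ ρ * ‖w₁‖ * ‖w₂‖)
    (J₀ : Finset (Fin q)) (hJ₀ : J₀.card ≤ qstar)
    (v : Fin q → E) (hvmem : ∀ j ∈ J₀, v j ∈ W j) (hvne : ∀ j ∈ J₀, v j ≠ 0)
    (f : E) (hf : f = ∑ j ∈ J₀, v j)
    (P : Finset (Fin q) → E)
    (hPmem : ∀ J : Finset (Fin q), P J ∈ J.sup W)
    (hPorth : ∀ J : Finset (Fin q), f - P J ∈ (J.sup W)ᗮ) :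
    (∀ J : Finset (Fin q), J.card ≤ qstar → ¬ J₀ ⊆ J → ‖P J‖ ^ 2 < ‖P J₀‖ ^ 2) ∧
    (∀ Jstar : Finset (Fin q), Jstar.card ≤ qstar →
      (∀ J : Finset (Fin q), J.card ≤ qstar → ‖P J‖ ^ 2 ≤ ‖P Jstar‖ ^ 2) →
      J₀ ⊆ Jstar) :=
  norms_of_projections_noiseless_selection_general q qstar W ρ hρ1 hangle J₀ hJ₀ v hvmem hvne f hf P
    hPmem hPorth
end

section
/- Let d be a positive integer and let X₁, …, X_d be independent standard Gaussian random variables (mean 0, variance 1) on a probability space. Let S = ∑_{i=1}^d X_i². Then for all x ≥ 0: P( S − d ≥ x ) ≤ exp( −x² / (2(2d + 2x)) ), and P( S − d ≤ −x ) ≤ exp( −x² / (4d) ). -/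
open MeasureTheory ProbabilityTheory Real

/-!
Chernoff's method. For a standard Gaussian `X` and `t < 1/2`, `E[exp (t X²)] = (1 - 2t)^(-1/2)`,
so by independence `E[exp (t S)] = (1 - 2t)^(-d/2)`, which bounds `P(S ≥ ε)` for `0 ≤ t` and
`P(S ≤ ε)` for `t ≤ 0` by `exp (-t ε) (1 - 2t)^(-d/2)`. Taking `t = x / (2(d + x))`, resp.
`t = -x / (2d)`, the two tails reduce to the elementary bounds
`(y - 1) - (y - 1)²/2 ≤ log y ≤ (y - y⁻¹)/2` for `y ≥ 1`, applied at `y = 1 + x/d`.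
-/

lemma monotoneOn_Ici_of_hasDerivAt_nonneg {a : ℝ} {f f' : ℝ → ℝ}
    (hf : ∀ x, a ≤ x → HasDerivAt f (f' x) x) (hf' : ∀ x, a ≤ x → 0 ≤ f' x) :
    MonotoneOn f (Set.Ici a) :=
  monotoneOn_of_hasDerivWithinAt_nonneg (convex_Ici a)
    (fun x hx => (hf x hx).continuousAt.continuousWithinAt)
    (fun x hx => (hf x (interior_subset hx)).hasDerivWithinAt)
    (fun x hx => hf' x (interior_subset hx))

namespace Real

lemma log_le_sub_inv_div_two {y : ℝ} (hy : 1 ≤ y) : log y ≤ (y - y⁻¹) / 2 := by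
  have hderiv : ∀ z : ℝ, 1 ≤ z →
      HasDerivAt (fun z => (z - z⁻¹) / 2 - log z) ((1 - z⁻¹) ^ 2 / 2) z := by
    intro z hz
    have hz0 : z ≠ 0 := by positivity
    refine ((((hasDerivAt_id' z).sub (hasDerivAt_inv hz0)).div_const 2).sub
      (hasDerivAt_log hz0)).congr_deriv ?_
    field_simp
    ring
  have := monotoneOn_Ici_of_hasDerivAt_nonneg hderiv (fun z _ => by positivity)
    Set.self_mem_Ici hy hy
  simpa using this

lemma sub_sub_sq_div_two_le_log {y : ℝ} (hy : 1 ≤ y) : y - 1 - (y - 1) ^ 2 / 2 ≤ log y := by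
  have hderiv : ∀ z : ℝ, 1 ≤ z →
      HasDerivAt (fun z => log z - (z - 1 - (z - 1) ^ 2 / 2)) ((z - 1) ^ 2 / z) z := by
    intro z hz
    have hz0 : z ≠ 0 := by positivity
    refine ((hasDerivAt_log hz0).sub (((hasDerivAt_id' z).sub_const 1).sub
      ((((hasDerivAt_id' z).sub_const 1).pow 2).div_const 2))).congr_deriv ?_
    field_simp
    ring
  have := monotoneOn_Ici_of_hasDerivAt_nonneg hderiv
    (fun z hz => div_nonneg (sq_nonneg _) (by linarith)) Set.self_mem_Ici hy hy
  simpa [sub_nonneg] using this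

end Real

-- For `t ≥ 1/2` both sides are junk zeros: the integrand is not integrable and `√` of a
-- negative number is `0`.
lemma integral_exp_mul_sq_gaussianReal (t : ℝ) :
    ∫ y, exp (t * y ^ 2) ∂gaussianReal 0 1 = (√(1 - 2 * t))⁻¹ := by
  have hdensity : ∀ y : ℝ, gaussianPDFReal 0 1 y • exp (t * y ^ 2)
      = (√(2 * π))⁻¹ * exp (-(1 / 2 - t) * y ^ 2) := by
    intro y
    rw [gaussianPDFReal, smul_eq_mul, mul_assoc, ← exp_add]
    push_cast
    ring_nf
  rw [integral_gaussianReal_eq_integral_smul one_ne_zero]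
  simp_rw [hdensity]
  rw [integral_const_mul, integral_gaussian,
    show π / (1 / 2 - t) = 2 * π / (1 - 2 * t) by field_simp,
    sqrt_div (by positivity), div_eq_mul_inv, inv_mul_cancel_left₀ (by positivity)]

section ChiSquare

variable {Ω ι : Type*} {mΩ : MeasurableSpace Ω} {μ : Measure Ω} {t : ℝ}

lemma ProbabilityTheory.HasLaw.mgf_sq_gaussianReal {X : Ω → ℝ}
    (hX : HasLaw X (gaussianReal 0 1) μ) (t : ℝ) :
    mgf (fun ω => X ω ^ 2) μ t = (√(1 - 2 * t))⁻¹ := by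
  rw [mgf, ← integral_exp_mul_sq_gaussianReal t,
    ← hX.integral_comp (f := fun y => exp (t * y ^ 2)) (by fun_prop)]
  rfl

variable [Fintype ι] {X : ι → Ω → ℝ}

lemma mgf_sum_sq_of_hasLaw_gaussianReal
    (hX : ∀ i, HasLaw (X i) (gaussianReal 0 1) μ) (hindep : iIndepFun X μ) (ht : t < 1 / 2) :
    mgf (fun ω => ∑ i, X i ω ^ 2) μ t = (1 - 2 * t) ^ (-(Fintype.card ι : ℝ) / 2) := by
  have hsq : iIndepFun (fun i ω => X i ω ^ 2) μ :=
    hindep.comp (fun _ y => y ^ 2) (fun _ => by fun_prop)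
  have hsum : (fun ω => ∑ i, X i ω ^ 2) = ∑ i, fun ω => X i ω ^ 2 := by
    ext ω; simp
  rw [hsum, hsq.mgf_sum₀ (fun i => (hX i).aemeasurable.pow_const 2)]
  simp_rw [fun i => (hX i).mgf_sq_gaussianReal t]
  rw [Finset.prod_const, Finset.card_univ, sqrt_eq_rpow, ← rpow_neg (by linarith),
    ← rpow_mul_natCast (by linarith)]
  ring_nf

lemma integrable_exp_mul_sum_sq_of_hasLaw_gaussianReal
    (hX : ∀ i, HasLaw (X i) (gaussianReal 0 1) μ) (hindep : iIndepFun X μ) (ht : t < 1 / 2) :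
    Integrable (fun ω => exp (t * ∑ i, X i ω ^ 2)) μ := by
  refine .of_integral_ne_zero ?_
  rw [← mgf, mgf_sum_sq_of_hasLaw_gaussianReal hX hindep ht]
  exact (rpow_pos_of_pos (by linarith) _).ne'

lemma measureReal_sum_sq_ge_le (hX : ∀ i, HasLaw (X i) (gaussianReal 0 1) μ)
    (hindep : iIndepFun X μ) (ht₀ : 0 ≤ t) (ht : t < 1 / 2) (ε : ℝ) :
    μ.real {ω | ε ≤ ∑ i, X i ω ^ 2} ≤
      exp (-t * ε) * (1 - 2 * t) ^ (-(Fintype.card ι : ℝ) / 2) := by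
  have := hindep.isProbabilityMeasure
  rw [← mgf_sum_sq_of_hasLaw_gaussianReal hX hindep ht]
  exact measure_ge_le_exp_mul_mgf ε ht₀
    (integrable_exp_mul_sum_sq_of_hasLaw_gaussianReal hX hindep ht)

lemma measureReal_sum_sq_le_le (hX : ∀ i, HasLaw (X i) (gaussianReal 0 1) μ)
    (hindep : iIndepFun X μ) (ht : t ≤ 0) (ε : ℝ) :
    μ.real {ω | ∑ i, X i ω ^ 2 ≤ ε} ≤
      exp (-t * ε) * (1 - 2 * t) ^ (-(Fintype.card ι : ℝ) / 2) := by
  have := hindep.isProbabilityMeasure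
  have ht' : t < 1 / 2 := by linarith
  rw [← mgf_sum_sq_of_hasLaw_gaussianReal hX hindep ht']
  exact measure_le_le_exp_mul_mgf ε ht
    (integrable_exp_mul_sum_sq_of_hasLaw_gaussianReal hX hindep ht')

end ChiSquare

lemma chiSq_upper_chernoff_bound_le {D x : ℝ} (hD : 0 < D) (hx : 0 ≤ x) :
    exp (-(x / (2 * (D + x))) * (D + x)) * (1 - 2 * (x / (2 * (D + x)))) ^ (-D / 2) ≤
      exp (-(x ^ 2) / (2 * (2 * D + 2 * x))) := by
  set y := (D + x) / D with hy_def
  have hy : 1 ≤ y := by rw [le_div_iff₀ hD]; linarith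
  have hbase : 1 - 2 * (x / (2 * (D + x))) = y⁻¹ := by rw [hy_def]; field_simp; ring
  rw [hbase, inv_rpow (by positivity), ← rpow_neg (by positivity), neg_div, neg_neg,
    rpow_def_of_pos (by positivity), ← exp_add, exp_le_exp]
  calc -(x / (2 * (D + x))) * (D + x) + log y * (D / 2)
      ≤ -(x / (2 * (D + x))) * (D + x) + (y - y⁻¹) / 2 * (D / 2) := by
        gcongr; exact log_le_sub_inv_div_two hy
    _ = -(x ^ 2) / (2 * (2 * D + 2 * x)) := by rw [hy_def]; field_simp; ring

lemma chiSq_lower_chernoff_bound_le {D x : ℝ} (hD : 0 < D) (hx : 0 ≤ x) :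
    exp (-(-x / (2 * D)) * (D - x)) * (1 - 2 * (-x / (2 * D))) ^ (-D / 2) ≤
      exp (-(x ^ 2) / (4 * D)) := by
  set y := 1 + x / D with hy_def
  have hy : 1 ≤ y := le_add_of_nonneg_right (by positivity)
  have hbase : 1 - 2 * (-x / (2 * D)) = y := by rw [hy_def]; field_simp; ring
  rw [hbase, rpow_def_of_pos (by positivity), ← exp_add, exp_le_exp]
  calc -(-x / (2 * D)) * (D - x) + log y * (-D / 2)
      ≤ -(-x / (2 * D)) * (D - x) + (y - 1 - (y - 1) ^ 2 / 2) * (-D / 2) := by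
        have hD' : -D / 2 ≤ 0 := by linarith
        linarith [mul_le_mul_of_nonpos_right (sub_sub_sq_div_two_le_log hy) hD']
    _ = -(x ^ 2) / (4 * D) := by rw [hy_def]; field_simp; ring

theorem norms_of_projections_lemma8_general
    {Ω : Type*} [MeasureSpace Ω]
    (d : ℕ) (hd : 0 < d) (X : Fin d → Ω → ℝ)
    (hmeas : ∀ i, Measurable (X i))
    (hindep : iIndepFun X ℙ)
    (hgauss : ∀ i, Measure.map (X i) ℙ = gaussianReal 0 1) :
    ∀ x : ℝ, 0 ≤ x →
      (ℙ {ω | x ≤ (∑ i, (X i ω) ^ 2) - d}).toReal ≤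
        Real.exp (-(x ^ 2) / (2 * (2 * d + 2 * x))) ∧
      (ℙ {ω | (∑ i, (X i ω) ^ 2) - d ≤ -x}).toReal ≤
        Real.exp (-(x ^ 2) / (4 * d)) := by
  intro x hx
  have hD : (0 : ℝ) < d := by exact_mod_cast hd
  have hlaw i : HasLaw (X i) (gaussianReal 0 1) ℙ := ⟨(hmeas i).aemeasurable, hgauss i⟩
  have hcard : (Fintype.card (Fin d) : ℝ) = d := by simp
  constructor
  · have ht : x / (2 * (d + x)) < 1 / 2 := by
      rw [div_lt_iff₀ (by positivity)]; linarith
    simp_rw [le_sub_iff_add_le', ← measureReal_def]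
    calc _ ≤ _ := measureReal_sum_sq_ge_le hlaw hindep (by positivity) ht _
      _ ≤ _ := by rw [hcard]; exact chiSq_upper_chernoff_bound_le hD hx
  · simp_rw [sub_le_iff_le_add, neg_add_eq_sub, ← measureReal_def]
    calc _ ≤ _ := measureReal_sum_sq_le_le hlaw hindep (t := -x / (2 * d))
          (div_nonpos_of_nonpos_of_nonneg (by linarith) (by positivity)) _
      _ ≤ _ := by rw [hcard]; exact chiSq_lower_chernoff_bound_le hD hx

/-- Lemma 8 of the paper (Laurent–Massart chi-square concentration): if
`S = ∑_{i=1}^d Xᵢ²` with `X₁,…,X_d` independent standard Gaussians, then for `x ≥ 0`,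
`P(S − d ≥ x) ≤ exp(−x²/(2(2d + 2x)))` and `P(S − d ≤ −x) ≤ exp(−x²/(4d))`. -/
theorem norms_of_projections_lemma8
    {Ω : Type*} [MeasureSpace Ω] [IsProbabilityMeasure (ℙ : Measure Ω)]
    (d : ℕ) (hd : 0 < d) (X : Fin d → Ω → ℝ)
    (hmeas : ∀ i, Measurable (X i))
    (hindep : iIndepFun X ℙ)
    (hgauss : ∀ i, Measure.map (X i) ℙ = gaussianReal 0 1) :
    ∀ x : ℝ, 0 ≤ x →
      (ℙ {ω | x ≤ (∑ i, (X i ω) ^ 2) - d}).toReal ≤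
        Real.exp (-(x ^ 2) / (2 * (2 * d + 2 * x))) ∧
      (ℙ {ω | (∑ i, (X i ω) ^ 2) - d ≤ -x}).toReal ≤
        Real.exp (-(x ^ 2) / (4 * d)) :=
  norms_of_projections_lemma8_general d hd X hmeas hindep hgauss
end

section
/- Let V be a real vector space equipped with a seminorm N, let ‖·‖ : V → ℝ be a nonnegative function on V, let J be a finite index set, and let g_j ∈ V and a_j ≥ 0 for j ∈ J. Let ε ∈ [0,1). Assume: (i) N(g_j)² ≤ a_j ‖g_j‖² for every j ∈ J; (ii) ‖∑_{j∈J} g_j‖² ≥ (1 − ε) ∑_{j∈J} ‖g_j‖². Then N(∑_{j∈J} g_j)² ≤ ((∑_{j∈J} a_j) / (1 − ε)) · ‖∑_{j∈J} g_j‖². -/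
theorem Seminorm.sq_apply_sum_le_sum_mul_sum {𝕜 V ι : Type*} [SeminormedRing 𝕜] [AddCommGroup V]
    [SMul 𝕜 V] (N : Seminorm 𝕜 V) (J : Finset ι) (g : ι → V) {a b : ι → ℝ}
    (ha : ∀ j ∈ J, 0 ≤ a j) (hb : ∀ j ∈ J, 0 ≤ b j) (h : ∀ j ∈ J, N (g j) ^ 2 ≤ a j * b j) :
    N (∑ j ∈ J, g j) ^ 2 ≤ (∑ j ∈ J, a j) * ∑ j ∈ J, b j :=
  calc N (∑ j ∈ J, g j) ^ 2 ≤ (∑ j ∈ J, N (g j)) ^ 2 := by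
        gcongr
        exact Finset.le_sum_of_subadditive N (map_zero N).le (map_add_le_add N) J g
    _ ≤ (∑ j ∈ J, a j) * ∑ j ∈ J, b j := Finset.sum_sq_le_sum_mul_sum_of_sq_le_mul J ha hb h

theorem norms_of_projections_supnorm_transfer_general
    {V : Type*} [AddCommGroup V] [Module ℝ V]
    (N : Seminorm ℝ V) (nrm : V → ℝ)
    {ι : Type*} (J : Finset ι) (g : ι → V) (a : ι → ℝ) (ha : ∀ j ∈ J, 0 ≤ a j)
    (ε : ℝ) (hε1 : ε < 1)
    (h1 : ∀ j ∈ J, (N (g j)) ^ 2 ≤ a j * (nrm (g j)) ^ 2)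
    (h2 : (nrm (∑ j ∈ J, g j)) ^ 2 ≥ (1 - ε) * ∑ j ∈ J, (nrm (g j)) ^ 2) :
    (N (∑ j ∈ J, g j)) ^ 2 ≤
      ((∑ j ∈ J, a j) / (1 - ε)) * (nrm (∑ j ∈ J, g j)) ^ 2 := by
  have hε : 0 < 1 - ε := sub_pos.mpr hε1
  calc N (∑ j ∈ J, g j) ^ 2 ≤ (∑ j ∈ J, a j) * ∑ j ∈ J, nrm (g j) ^ 2 :=
        N.sq_apply_sum_le_sum_mul_sum J g ha (fun j _ ↦ sq_nonneg _) h1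
    _ ≤ (∑ j ∈ J, a j) * (nrm (∑ j ∈ J, g j) ^ 2 / (1 - ε)) := by
        gcongr
        · exact Finset.sum_nonneg ha
        · exact (le_div_iff₀' hε).mpr h2
    _ = (∑ j ∈ J, a j) / (1 - ε) * nrm (∑ j ∈ J, g j) ^ 2 := by ring

/-- The abstract form of inequality (3.2) of Appendix E of the paper: for a seminorm
`N` (playing the role of the sup-norm) and a nonnegative function `nrm` (playing the
role of the L²-norm), if `N(g_j)² ≤ a_j nrm(g_j)²` for `j ∈ J` and
`nrm(∑_{j∈J} g_j)² ≥ (1 − ε) ∑_{j∈J} nrm(g_j)²`, then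
`N(∑_{j∈J} g_j)² ≤ ((∑_{j∈J} a_j)/(1 − ε)) nrm(∑_{j∈J} g_j)²`. -/
theorem norms_of_projections_supnorm_transfer
    {V : Type*} [AddCommGroup V] [Module ℝ V]
    (N : Seminorm ℝ V) (nrm : V → ℝ) (hnrm : ∀ g, 0 ≤ nrm g)
    {ι : Type*} (J : Finset ι) (g : ι → V) (a : ι → ℝ) (ha : ∀ j ∈ J, 0 ≤ a j)
    (ε : ℝ) (hε0 : 0 ≤ ε) (hε1 : ε < 1)
    (h1 : ∀ j ∈ J, (N (g j)) ^ 2 ≤ a j * (nrm (g j)) ^ 2)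
    (h2 : (nrm (∑ j ∈ J, g j)) ^ 2 ≥ (1 - ε) * ∑ j ∈ J, (nrm (g j)) ^ 2) :
    (N (∑ j ∈ J, g j)) ^ 2 ≤
      ((∑ j ∈ J, a j) / (1 - ε)) * (nrm (∑ j ∈ J, g j)) ^ 2 :=
  norms_of_projections_supnorm_transfer_general N nrm J g a ha ε hε1 h1 h2
end

section
/- Let (S, 𝒮, μ) be a probability space, let n, q, q* be positive integers, and let x¹, …, xⁿ ∈ S. For a bounded measurable function g : S → ℝ set ‖g‖² = ∫ g² dμ and ‖g‖ₙ² = (1/n) ∑_{i=1}^n g(xⁱ)². Let V₁, …, V_q be finite-dimensional linear subspaces of the space of bounded measurable functions S → ℝ, and for J ⊆ {1,…,q} write V_J = ∑_{j∈J} V_j. Equip ℝⁿ with the inner product ⟨u, w⟩ₙ = (1/n) ∑_{i=1}^n u_i w_i and let Π̂_J denote the orthogonal projection of ℝⁿ onto the subspace {(g(x¹),…,g(xⁿ)) : g ∈ V_J}. Let ρ ∈ [0,1) and δ ∈ (0,1), let J₀, J ⊆ {1,…,q} with |J₀| ≤ q*, |J| ≤ q* and J₀ \ J ≠ ∅. Assume: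 (i) for all disjoint J₁, J₂ ⊆ {1,…,q} with |J₁|, |J₂| ≤ q* and all g₁ ∈ V_{J₁}, g₂ ∈ V_{J₂}, ∫ g₁ g₂ dμ ≤ ρ ‖g₁‖ ‖g₂‖; (ii) (1 − δ)‖g‖² ≤ ‖g‖ₙ² ≤ (1 + δ)‖g‖² for all g ∈ V_{J ∪ J₀}. Let v_j ∈ V_j for j ∈ J₀, let v = ∑_{j∈J₀} v_j, and let v̂ = (v(x¹),…,v(xⁿ)) ∈ ℝⁿ. Then ‖Π̂_{J₀} v̂‖ₙ² − ‖Π̂_J v̂‖ₙ² = ‖v̂ − Π̂_J v̂‖ₙ² ≥ ((1 − δ)/(1 + δ)) (1 − ρ²) ‖∑_{j∈J₀\J} v_j‖ₙ², where ‖u‖ₙ² = (1/n)∑_{i=1}^n u_i² for u ∈ ℝⁿ. -/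
/-!
The first claim is Pythagoras for the empirical inner product: the residual `v̂ - Π̂_J v̂` is
orthogonal to `Π̂_J v̂`, and `Π̂_{J₀} v̂ = v̂` because `v ∈ V_{J₀}`.

For the inequality write `v - g_J = w - h` with `w = ∑_{j ∈ J₀ \ J} v_j ∈ V_{J₀ \ J}` and
`h ∈ V_J`, where `g_J ∈ V_J` is the function whose evaluations give `Π̂_J v̂`. The minimal-angle
condition gives `‖w - h‖² ≥ ‖w‖² - 2ρ‖w‖‖h‖ + ‖h‖² ≥ (1 - ρ²)‖w‖²` in the population norm, and
the two-sided comparison of the empirical and population norms on `V_{J ∪ J₀}` transfers this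
to the empirical norm at the cost of the factor `(1 - δ)/(1 + δ)`.
-/

open MeasureTheory Finset

namespace Submodule

variable {R M ι : Type*} [Semiring R] [AddCommMonoid M] [Module R M] {p : ι → Submodule R M}

theorem sum_mem_finset_sup_s15 {s : Finset ι} {f : ι → M} (h : ∀ i ∈ s, f i ∈ p i) :
    ∑ i ∈ s, f i ∈ s.sup p := by
  rw [Finset.sup_eq_iSup]
  exact sum_mem_biSup h

theorem mem_finset_sup_of_subset {s t : Finset ι} (hst : s ⊆ t) {x : M} (hx : x ∈ s.sup p) :
    x ∈ t.sup p :=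
  Finset.sup_mono (f := p) hst hx

end Submodule

section WeightedSum

variable {ι : Type*} [Fintype ι]

theorem weighted_sum_sq_sub_sum_sq (c : ℝ) {u p : ι → ℝ}
    (horth : c * ∑ i, (u i - p i) * p i = 0) :
    c * ∑ i, u i ^ 2 - c * ∑ i, p i ^ 2 = c * ∑ i, (u i - p i) ^ 2 := by
  have hexpand : ∑ i, u i ^ 2 =
      ∑ i, (u i - p i) ^ 2 + 2 * ∑ i, (u i - p i) * p i + ∑ i, p i ^ 2 := by
    rw [Finset.mul_sum, ← Finset.sum_add_distrib, ← Finset.sum_add_distrib]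
    exact Finset.sum_congr rfl fun i _ => by ring
  rw [hexpand]
  linear_combination 2 * horth

theorem weighted_sum_sq_eq_of_residual_orthogonal (c : ℝ) {u p : ι → ℝ}
    (horth : c * ∑ i, (u i - p i) * p i = 0)
    (hself : c * ∑ i, (u i - p i) * (u i - p i) = 0) :
    c * ∑ i, p i ^ 2 = c * ∑ i, u i ^ 2 := by
  have hpyth := weighted_sum_sq_sub_sum_sq c horth
  simp only [sq] at hpyth ⊢
  linarith

end WeightedSum

section Population

variable {S : Type*} [MeasurableSpace S]

def memLpSubmodule (p : ENNReal) (μ : Measure S) : Submodule ℝ (S → ℝ) where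
  carrier := {g | MemLp g p μ}
  add_mem' hf hg := hf.add hg
  zero_mem' := MemLp.zero
  smul_mem' c _ hf := hf.const_smul c

theorem finset_sup_le_memLpSubmodule {ι : Type*} {V : ι → Submodule ℝ (S → ℝ)}
    (μ : Measure S) [IsFiniteMeasure μ] (p : ENNReal)
    (hbdd : ∀ j, ∀ g ∈ V j, Measurable g ∧ ∃ M : ℝ, ∀ s : S, |g s| ≤ M) (T : Finset ι) :
    T.sup V ≤ memLpSubmodule p μ :=
  Finset.sup_le fun j _ g hg =>
    MemLp.of_bound (hbdd j g hg).1.aestronglyMeasurable _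
      (Filter.Eventually.of_forall (hbdd j g hg).2.choose_spec)

theorem integral_sub_sq_eq {μ : Measure S} {w h : S → ℝ} (hw : MemLp w 2 μ)
    (hh : MemLp h 2 μ) :
    ∫ s, (w s - h s) ^ 2 ∂μ =
      ∫ s, w s ^ 2 ∂μ - 2 * ∫ s, w s * h s ∂μ + ∫ s, h s ^ 2 ∂μ := by
  have hwh : Integrable (fun s => 2 * (w s * h s)) μ := (hw.integrable_mul hh).const_mul 2
  rw [← integral_const_mul, ← integral_sub hw.integrable_sq hwh,
    ← integral_add (f := fun s => w s ^ 2 - 2 * (w s * h s)) (hw.integrable_sq.sub hwh)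
      hh.integrable_sq]
  exact integral_congr_ae (Filter.Eventually.of_forall fun s => by simp only; ring)

theorem one_sub_sq_mul_integral_sq_le {μ : Measure S} {w h : S → ℝ} (hw : MemLp w 2 μ)
    (hh : MemLp h 2 μ) {ρ : ℝ}
    (hangle : ∫ s, w s * h s ∂μ ≤ ρ * √(∫ s, w s ^ 2 ∂μ) * √(∫ s, h s ^ 2 ∂μ)) :
    (1 - ρ ^ 2) * ∫ s, w s ^ 2 ∂μ ≤ ∫ s, (w s - h s) ^ 2 ∂μ := by
  have ha := Real.sq_sqrt (integral_nonneg fun s => sq_nonneg (w s) : 0 ≤ ∫ s, w s ^ 2 ∂μ)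
  have hb := Real.sq_sqrt (integral_nonneg fun s => sq_nonneg (h s) : 0 ≤ ∫ s, h s ^ 2 ∂μ)
  rw [integral_sub_sq_eq hw hh, ← ha, ← hb]
  nlinarith [sq_nonneg (ρ * √(∫ s, w s ^ 2 ∂μ) - √(∫ s, h s ^ 2 ∂μ))]

end Population

theorem mul_le_of_norm_equiv {δ κ Ew Pw Ef Pf : ℝ} (hδ0 : 0 < 1 + δ) (hδ1 : δ ≤ 1) (hκ : 0 ≤ κ)
    (hw : Ew ≤ (1 + δ) * Pw) (hfw : κ * Pw ≤ Pf) (hf : (1 - δ) * Pf ≤ Ef) :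
    (1 - δ) / (1 + δ) * κ * Ew ≤ Ef :=
  calc (1 - δ) / (1 + δ) * κ * Ew
      ≤ (1 - δ) / (1 + δ) * κ * ((1 + δ) * Pw) := by gcongr
    _ = (1 - δ) * (κ * Pw) := by field_simp
    _ ≤ (1 - δ) * Pf := by gcongr
    _ ≤ Ef := hf

theorem norms_of_projections_proposition2_general
    {S : Type*} [MeasurableSpace S] (μ : Measure S) [IsProbabilityMeasure μ]
    (n q qstar : ℕ)
    (xs : Fin n → S)
    (V : Fin q → Submodule ℝ (S → ℝ))
    (hmb : ∀ j, ∀ g ∈ V j, Measurable g ∧ ∃ M : ℝ, ∀ s : S, |g s| ≤ M)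
    (ρ δ : ℝ) (hρ0 : 0 ≤ ρ) (hρ1 : ρ < 1) (hδ0 : 0 < δ) (hδ1 : δ < 1)
    (J₀ J : Finset (Fin q)) (hJ₀c : J₀.card ≤ qstar) (hJc : J.card ≤ qstar)
    (hangle : ∀ J₁ J₂ : Finset (Fin q), Disjoint J₁ J₂ →
      J₁.card ≤ qstar → J₂.card ≤ qstar →
      ∀ g₁ ∈ J₁.sup V, ∀ g₂ ∈ J₂.sup V,
        ∫ s, g₁ s * g₂ s ∂μ ≤
          ρ * Real.sqrt (∫ s, (g₁ s) ^ 2 ∂μ) * Real.sqrt (∫ s, (g₂ s) ^ 2 ∂μ))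
    (hemp : ∀ g ∈ (J ∪ J₀).sup V,
      (1 - δ) * ∫ s, (g s) ^ 2 ∂μ ≤ (1 / n : ℝ) * ∑ i, (g (xs i)) ^ 2 ∧
      (1 / n : ℝ) * ∑ i, (g (xs i)) ^ 2 ≤ (1 + δ) * ∫ s, (g s) ^ 2 ∂μ)
    (v : Fin q → (S → ℝ)) (hv : ∀ j ∈ J₀, v j ∈ V j)
    (vhat : Fin n → ℝ) (hvhat : vhat = fun i => (∑ j ∈ J₀, v j) (xs i))
    (pJ₀ pJ : Fin n → ℝ)
    (hpJ₀mem : ∃ g ∈ J₀.sup V, pJ₀ = fun i => g (xs i))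
    (hpJ₀orth : ∀ g ∈ J₀.sup V, (1 / n : ℝ) * ∑ i, (vhat i - pJ₀ i) * g (xs i) = 0)
    (hpJmem : ∃ g ∈ J.sup V, pJ = fun i => g (xs i))
    (hpJorth : ∀ g ∈ J.sup V, (1 / n : ℝ) * ∑ i, (vhat i - pJ i) * g (xs i) = 0) :
    ((1 / n : ℝ) * ∑ i, (pJ₀ i) ^ 2) - ((1 / n : ℝ) * ∑ i, (pJ i) ^ 2) =
      (1 / n : ℝ) * ∑ i, (vhat i - pJ i) ^ 2 ∧
    (1 / n : ℝ) * ∑ i, (vhat i - pJ i) ^ 2 ≥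
      ((1 - δ) / (1 + δ)) * (1 - ρ ^ 2) *
        ((1 / n : ℝ) * ∑ i, ((∑ j ∈ J₀ \ J, v j) (xs i)) ^ 2) := by
  obtain ⟨g₀, hg₀, rfl⟩ := hpJ₀mem
  obtain ⟨gJ, hgJ, rfl⟩ := hpJmem
  subst hvhat
  have hv₀ : ∑ j ∈ J₀, v j ∈ J₀.sup V := Submodule.sum_mem_finset_sup_s15 hv
  refine ⟨?_, ?_⟩
  · rw [weighted_sum_sq_eq_of_residual_orthogonal _ (hpJ₀orth g₀ hg₀)
      (hpJ₀orth _ (sub_mem hv₀ hg₀)), weighted_sum_sq_sub_sum_sq _ (hpJorth gJ hgJ)]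
  set w := ∑ j ∈ J₀ \ J, v j
  set h := gJ - ∑ j ∈ J₀ ∩ J, v j
  have hw : w ∈ (J₀ \ J).sup V :=
    Submodule.sum_mem_finset_sup_s15 fun j hj => hv j (mem_sdiff.1 hj).1
  have hh : h ∈ J.sup V := sub_mem hgJ <| Submodule.mem_finset_sup_of_subset
    inter_subset_right (Submodule.sum_mem_finset_sup_s15 fun j hj => hv j (mem_inter.1 hj).1)
  have hsplit : ∑ j ∈ J₀, v j - gJ = w - h := by
    rw [← sum_inter_add_sum_sdiff J₀ J, sub_sub_eq_add_sub, add_comm w]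
  have hL2 := finset_sup_le_memLpSubmodule μ 2 hmb
  have hpop : (1 - ρ ^ 2) * ∫ s, w s ^ 2 ∂μ ≤ ∫ s, (∑ j ∈ J₀, v j - gJ) s ^ 2 ∂μ := by
    rw [hsplit]
    exact one_sub_sq_mul_integral_sq_le (hL2 _ hw) (hL2 _ hh) (hangle _ _ sdiff_disjoint
      ((card_le_card sdiff_subset).trans hJ₀c) hJc w hw h hh)
  have hlow := (hemp _ (sub_mem (Submodule.mem_finset_sup_of_subset subset_union_right hv₀)
    (Submodule.mem_finset_sup_of_subset subset_union_left hgJ))).1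
  have hup := (hemp w (Submodule.mem_finset_sup_of_subset
    (sdiff_subset.trans subset_union_right) hw)).2
  exact mul_le_of_norm_equiv (by linarith) hδ1.le (by nlinarith) hup hpop hlow

/-- Proposition 2 of the paper (finite-sample empirical version of the population
projection-gap inequality, on the event `ℰ_{δ,J∪J₀}`). The empirical projections
`Π̂_J` onto the evaluation subspaces `{(g(x¹),…,g(xⁿ)) : g ∈ V_J}` of `ℝⁿ` with
inner product `⟨u,w⟩ₙ = (1/n)∑ᵢ uᵢwᵢ` are encoded via their characteristic
property (membership plus orthogonality). Under the minimal-angle condition for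
the population norm and the event `(1−δ)‖g‖² ≤ ‖g‖ₙ² ≤ (1+δ)‖g‖²` on `V_{J∪J₀}`,
for `v = ∑_{j∈J₀} v_j` with `v_j ∈ V_j`,
`‖Π̂_{J₀}v̂‖ₙ² − ‖Π̂_J v̂‖ₙ² = ‖v̂ − Π̂_J v̂‖ₙ² ≥ ((1−δ)/(1+δ))(1−ρ²)‖∑_{j∈J₀\J} v_j‖ₙ²`. -/
theorem norms_of_projections_proposition2
    {S : Type*} [MeasurableSpace S] (μ : Measure S) [IsProbabilityMeasure μ]
    (n q qstar : ℕ) (hn : 0 < n) (hq : 0 < q) (hqstar : 0 < qstar)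
    (xs : Fin n → S)
    (V : Fin q → Submodule ℝ (S → ℝ))
    (hmb : ∀ j, ∀ g ∈ V j, Measurable g ∧ ∃ M : ℝ, ∀ s : S, |g s| ≤ M)
    (hfd : ∀ j, FiniteDimensional ℝ (V j))
    (ρ δ : ℝ) (hρ0 : 0 ≤ ρ) (hρ1 : ρ < 1) (hδ0 : 0 < δ) (hδ1 : δ < 1)
    (J₀ J : Finset (Fin q)) (hJ₀c : J₀.card ≤ qstar) (hJc : J.card ≤ qstar)
    (hmiss : (J₀ \ J).Nonempty)
    (hangle : ∀ J₁ J₂ : Finset (Fin q), Disjoint J₁ J₂ →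
      J₁.card ≤ qstar → J₂.card ≤ qstar →
      ∀ g₁ ∈ J₁.sup V, ∀ g₂ ∈ J₂.sup V,
        ∫ s, g₁ s * g₂ s ∂μ ≤
          ρ * Real.sqrt (∫ s, (g₁ s) ^ 2 ∂μ) * Real.sqrt (∫ s, (g₂ s) ^ 2 ∂μ))
    (hemp : ∀ g ∈ (J ∪ J₀).sup V,
      (1 - δ) * ∫ s, (g s) ^ 2 ∂μ ≤ (1 / n : ℝ) * ∑ i, (g (xs i)) ^ 2 ∧
      (1 / n : ℝ) * ∑ i, (g (xs i)) ^ 2 ≤ (1 + δ) * ∫ s, (g s) ^ 2 ∂μ)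
    (v : Fin q → (S → ℝ)) (hv : ∀ j ∈ J₀, v j ∈ V j)
    (vhat : Fin n → ℝ) (hvhat : vhat = fun i => (∑ j ∈ J₀, v j) (xs i))
    (pJ₀ pJ : Fin n → ℝ)
    (hpJ₀mem : ∃ g ∈ J₀.sup V, pJ₀ = fun i => g (xs i))
    (hpJ₀orth : ∀ g ∈ J₀.sup V, (1 / n : ℝ) * ∑ i, (vhat i - pJ₀ i) * g (xs i) = 0)
    (hpJmem : ∃ g ∈ J.sup V, pJ = fun i => g (xs i))
    (hpJorth : ∀ g ∈ J.sup V, (1 / n : ℝ) * ∑ i, (vhat i - pJ i) * g (xs i) = 0) :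
    ((1 / n : ℝ) * ∑ i, (pJ₀ i) ^ 2) - ((1 / n : ℝ) * ∑ i, (pJ i) ^ 2) =
      (1 / n : ℝ) * ∑ i, (vhat i - pJ i) ^ 2 ∧
    (1 / n : ℝ) * ∑ i, (vhat i - pJ i) ^ 2 ≥
      ((1 - δ) / (1 + δ)) * (1 - ρ ^ 2) *
        ((1 / n : ℝ) * ∑ i, ((∑ j ∈ J₀ \ J, v j) (xs i)) ^ 2) :=
  norms_of_projections_proposition2_general μ n q qstar xs V hmb ρ δ hρ0 hρ1 hδ0 hδ1 J₀ J hJ₀c hJc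
    hangle hemp v hv vhat hvhat pJ₀ pJ hpJ₀mem hpJ₀orth hpJmem hpJorth
end
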